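/- arXiv:1912.06245 — 5 statements merged into one kernel-verified Lean document; each statement's English description precedes it below -/
import Mathlib

section
/- Let d ≥ 3 and let Γ be the Odd graph O_{d+1}. For any vertex γ of Γ, the number of connected components of the subgraph of Γ induced on Γ_d(γ) (the d-th subconstituent with respect to γ) equals (1/2)·C(2m, m), where m = d/2 if d is even and m = (d+1)/2 if d is odd. -/
open Finset

/-- The vertices of the Odd graph `O_{d+1}`: the `d`-element subsets of a fixed
`(2d+1)`-element set. -/
abbrev OddVertex (d : ℕ) : Type := {s : Finset (Fin (2 * d + 1)) // s.card = d}

/-- The Odd graph `O_{d+1}`: two `d`-subsets of a `(2d+1)`-set are adjacent whenever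
they are disjoint. -/
def oddGraph (d : ℕ) : SimpleGraph (OddVertex d) where
  Adj α β := α ≠ β ∧ Disjoint (α : Finset (Fin (2 * d + 1))) (β : Finset (Fin (2 * d + 1)))
  symm := by
    constructor
    intro α β h
    exact ⟨h.1.symm, h.2.symm⟩
  loopless := by
    constructor
    intro α h
    exact h.1 rfl

namespace OddAux
open SimpleGraph
variable {d m : ℕ}

lemma odd_adj {α β : OddVertex d} (hd : 1 ≤ d)
    (h : Disjoint (α : Finset (Fin (2*d+1))) (β : Finset (Fin (2*d+1)))) :
    (oddGraph d).Adj α β := by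
  refine ⟨?_, h⟩
  rintro rfl
  have h2 : (α : Finset (Fin (2*d+1))) = ∅ := disjoint_self.mp h
  have := α.2
  rw [h2] at this
  simp at this
  omega

lemma walk2 (hd : 1 ≤ d) {α α' : OddVertex d}
    (h : ((α : Finset (Fin (2*d+1))) ∪ (α' : Finset (Fin (2*d+1)))).card = d + 1) :
    ∃ W : (oddGraph d).Walk α α', W.length = 2 := by
  have hβc : (((α : Finset (Fin (2*d+1))) ∪ (α' : Finset (Fin (2*d+1))))ᶜ).card = d := by
    rw [Finset.card_compl, h, Fintype.card_fin]; omega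
  set β : OddVertex d := ⟨_, hβc⟩ with hβ
  have h1 : (oddGraph d).Adj α β :=
    odd_adj hd (disjoint_compl_right.mono_left subset_union_left)
  have h2 : (oddGraph d).Adj β α' :=
    ((odd_adj hd (disjoint_compl_right.mono_left subset_union_right)).symm)
  exact ⟨SimpleGraph.Walk.cons h1 (SimpleGraph.Walk.cons h2 SimpleGraph.Walk.nil), rfl⟩

lemma upper1 (hd : 1 ≤ d) (γ : OddVertex d) :
    ∀ (j : ℕ) (α : OddVertex d), d ≤ ((γ : Finset (Fin (2*d+1))) ∩ α).card + j →
    ∃ W : (oddGraph d).Walk γ α, W.length ≤ 2 * j := by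
  intro j
  induction j with
  | zero =>
    intro α hα
    have h1 : ((γ : Finset (Fin (2*d+1))) ∩ α).card = d := by
      have := Finset.card_le_card (Finset.inter_subset_left (s₁ := (γ : Finset (Fin (2*d+1)))) (s₂ := α))
      rw [γ.2] at this; omega
    have h2 : (γ : Finset (Fin (2*d+1))) ∩ α = γ :=
      Finset.eq_of_subset_of_card_le Finset.inter_subset_left (by rw [γ.2, h1])
    have h3 : (γ : Finset (Fin (2*d+1))) ∩ α = α :=
      Finset.eq_of_subset_of_card_le Finset.inter_subset_right (by rw [α.2, h1])
    have heq : γ = α := Subtype.ext (h2 ▸ h3)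
    subst heq
    exact ⟨SimpleGraph.Walk.nil, by simp⟩
  | succ j ih =>
    intro α hα
    by_cases hc : d ≤ ((γ : Finset (Fin (2*d+1))) ∩ α).card + j
    · obtain ⟨W, hW⟩ := ih α hc
      exact ⟨W, by omega⟩
    · set G := (γ : Finset (Fin (2*d+1))) with hG
      set A := (α : Finset (Fin (2*d+1))) with hA
      have hGA : (G ∩ A).card < d := by omega
      have hGd : G.card = d := γ.2
      have hAd : A.card = d := α.2
      have hx : (G \ A).Nonempty := by
        rw [← Finset.card_pos]
        have := Finset.card_sdiff_add_card_inter G A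
        omega
      have hy : (A \ G).Nonempty := by
        rw [← Finset.card_pos]
        have := Finset.card_sdiff_add_card_inter A G
        rw [Finset.inter_comm] at this
        omega
      obtain ⟨x, hxm⟩ := hx
      obtain ⟨y, hym⟩ := hy
      rw [Finset.mem_sdiff] at hxm hym
      have hxA : x ∉ A := hxm.2
      have hcard : (insert x (A.erase y)).card = d := by
        rw [Finset.card_insert_of_notMem (by simp [hxA]), Finset.card_erase_of_mem hym.1, hAd]
        omega
      set α' : OddVertex d := ⟨insert x (A.erase y), hcard⟩ with hα'
      have hGA' : G ∩ (α' : Finset (Fin (2*d+1))) = insert x (G ∩ A) := by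
        ext z
        simp only [hα', Finset.mem_inter, Finset.mem_insert, Finset.mem_erase]
        constructor
        · rintro ⟨hzG, hz⟩
          rcases hz with rfl | ⟨hzy, hzA⟩
          · exact Or.inl rfl
          · exact Or.inr ⟨hzG, hzA⟩
        · rintro (rfl | ⟨hzG, hzA⟩)
          · exact ⟨hxm.1, Or.inl rfl⟩
          · exact ⟨hzG, Or.inr ⟨fun h => hym.2 (h ▸ hzG), hzA⟩⟩
      have hcard' : (G ∩ (α' : Finset (Fin (2*d+1)))).card = (G ∩ A).card + 1 := by
        rw [hGA', Finset.card_insert_of_notMem (by simp [hxA])]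
      obtain ⟨W', hW'⟩ := ih α' (by omega)
      have hun : ((α' : Finset (Fin (2*d+1))) ∪ A).card = d + 1 := by
        have : (α' : Finset (Fin (2*d+1))) ∪ A = insert x A := by
          ext z
          simp only [hα', Finset.mem_union, Finset.mem_insert, Finset.mem_erase]
          constructor
          · rintro ((rfl | ⟨_, h⟩) | h) <;> tauto
          · rintro (rfl | h)
            · exact Or.inl (Or.inl rfl)
            · exact Or.inr h
        rw [this, Finset.card_insert_of_notMem hxA, hAd]
      obtain ⟨W2, hW2⟩ := walk2 hd hun
      exact ⟨W'.append W2, by rw [SimpleGraph.Walk.length_append]; omega⟩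

lemma upper2 (hd : 1 ≤ d) (γ : OddVertex d) :
    ∀ (j : ℕ) (α : OddVertex d), ((γ : Finset (Fin (2*d+1))) ∩ α).card ≤ j →
    ∃ W : (oddGraph d).Walk γ α, W.length ≤ 2 * j + 1 := by
  intro j
  induction j with
  | zero =>
    intro α hα
    have hdisj : Disjoint (γ : Finset (Fin (2*d+1))) (α : Finset (Fin (2*d+1))) := by
      rw [Finset.disjoint_iff_inter_eq_empty, ← Finset.card_eq_zero]
      omega
    exact ⟨SimpleGraph.Walk.cons (odd_adj hd hdisj) SimpleGraph.Walk.nil, by simp⟩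
  | succ j ih =>
    intro α hα
    by_cases hc : ((γ : Finset (Fin (2*d+1))) ∩ α).card ≤ j
    · obtain ⟨W, hW⟩ := ih α hc
      exact ⟨W, by omega⟩
    · set G := (γ : Finset (Fin (2*d+1))) with hG
      set A := (α : Finset (Fin (2*d+1))) with hA
      have hGd : G.card = d := γ.2
      have hAd : A.card = d := α.2
      have hy : (G ∩ A).Nonempty := by rw [← Finset.card_pos]; omega
      obtain ⟨y, hym⟩ := hy
      rw [Finset.mem_inter] at hym
      have hsle : (G ∩ A).card ≤ d := by
        have := Finset.card_le_card (Finset.inter_subset_left (s₁ := G) (s₂ := A))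
        omega
      have hx : ((G ∪ A)ᶜ).Nonempty := by
        rw [← Finset.card_pos, Finset.card_compl, Fintype.card_fin]
        have := Finset.card_inter_add_card_union G A
        have := Finset.card_le_card (Finset.subset_univ (G ∪ A))
        omega
      obtain ⟨x, hxm⟩ := hx
      rw [Finset.mem_compl, Finset.mem_union] at hxm
      push_neg at hxm
      have hxA : x ∉ A := hxm.2
      have hcard : (insert x (A.erase y)).card = d := by
        rw [Finset.card_insert_of_notMem (by simp [hxA]), Finset.card_erase_of_mem hym.2, hAd]
        omega
      set α' : OddVertex d := ⟨insert x (A.erase y), hcard⟩ with hα'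
      have hGA' : G ∩ (α' : Finset (Fin (2*d+1))) = (G ∩ A).erase y := by
        ext z
        simp only [hα', Finset.mem_inter, Finset.mem_insert, Finset.mem_erase]
        constructor
        · rintro ⟨hzG, hz⟩
          rcases hz with rfl | ⟨hzy, hzA⟩
          · exact absurd hzG hxm.1
          · exact ⟨hzy, hzG, hzA⟩
        · rintro ⟨hzy, hzG, hzA⟩
          exact ⟨hzG, Or.inr ⟨hzy, hzA⟩⟩
      have hcard' : (G ∩ (α' : Finset (Fin (2*d+1)))).card = (G ∩ A).card - 1 := by
        rw [hGA', Finset.card_erase_of_mem (Finset.mem_inter.mpr hym)]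
      obtain ⟨W', hW'⟩ := ih α' (by omega)
      have hun : ((α' : Finset (Fin (2*d+1))) ∪ A).card = d + 1 := by
        have : (α' : Finset (Fin (2*d+1))) ∪ A = insert x A := by
          ext z
          simp only [hα', Finset.mem_union, Finset.mem_insert, Finset.mem_erase]
          constructor
          · rintro ((rfl | ⟨_, h⟩) | h) <;> tauto
          · rintro (rfl | h)
            · exact Or.inl (Or.inl rfl)
            · exact Or.inr h
        rw [this, Finset.card_insert_of_notMem hxA, hAd]
      obtain ⟨W2, hW2⟩ := walk2 hd hun
      exact ⟨W'.append W2, by rw [SimpleGraph.Walk.length_append]; omega⟩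

lemma inter_card_le (γ α : OddVertex d) : ((γ : Finset (Fin (2*d+1))) ∩ α).card ≤ d := by
  have := Finset.card_le_card (Finset.inter_subset_left (s₁ := (γ : Finset (Fin (2*d+1)))) (s₂ := (α : Finset (Fin (2*d+1)))))
  rw [γ.2] at this; exact this

lemma step_bounds (γ : OddVertex d) {α β : OddVertex d} (h : (oddGraph d).Adj α β) :
    ((γ : Finset (Fin (2*d+1))) ∩ α).card + ((γ : Finset (Fin (2*d+1))) ∩ β).card ≤ d ∧
    d ≤ ((γ : Finset (Fin (2*d+1))) ∩ α).card + ((γ : Finset (Fin (2*d+1))) ∩ β).card + 1 := by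
  set G := (γ : Finset (Fin (2*d+1))) with hG
  set A := (α : Finset (Fin (2*d+1))) with hA
  set B := (β : Finset (Fin (2*d+1))) with hB
  have hdisj : Disjoint (G ∩ A) (G ∩ B) :=
    h.2.mono Finset.inter_subset_right Finset.inter_subset_right
  have hcu : (G ∩ A ∪ G ∩ B).card = (G ∩ A).card + (G ∩ B).card :=
    Finset.card_union_of_disjoint hdisj
  constructor
  · have hsub : G ∩ A ∪ G ∩ B ⊆ G := by
      apply Finset.union_subset Finset.inter_subset_left Finset.inter_subset_left
    have := Finset.card_le_card hsub
    rw [hcu, γ.2] at this; exact this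
  · have h1 : (G ∩ (A ∪ B)).card + (G \ (A ∪ B)).card = G.card :=
      Finset.card_inter_add_card_sdiff G (A ∪ B)
    have h2 : G ∩ (A ∪ B) = G ∩ A ∪ G ∩ B := Finset.inter_union_distrib_left G A B
    have h3 : (G \ (A ∪ B)).card ≤ 1 := by
      have hsub : G \ (A ∪ B) ⊆ (A ∪ B)ᶜ := by
        intro z hz
        rw [Finset.mem_compl]
        exact (Finset.mem_sdiff.mp hz).2
      have hc := Finset.card_le_card hsub
      rw [Finset.card_compl, Fintype.card_fin, Finset.card_union_of_disjoint h.2, α.2, β.2] at hc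
      omega
    rw [h2, hcu] at h1
    have hGd : G.card = d := γ.2
    omega

lemma lower :
    ∀ (α γ : OddVertex d) (W : (oddGraph d).Walk α γ),
      min (2*(d - ((γ : Finset (Fin (2*d+1))) ∩ α).card)) (2*((γ : Finset (Fin (2*d+1))) ∩ α).card + 1)
        ≤ W.length := by
  intro α γ W
  induction W with
  | nil =>
    rename_i u
    have hu : ((u : Finset (Fin (2*d+1)))).card = d := u.2
    simp [Finset.inter_self, hu]
  | @cons u v w h W ih =>
    have hb := step_bounds w h
    have h1 := inter_card_le w u
    have h2 := inter_card_le w v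
    simp only [SimpleGraph.Walk.length_cons]
    omega

lemma dist_eq_min (hd : 1 ≤ d) (γ α : OddVertex d) :
    (oddGraph d).dist γ α =
      min (2*(d - ((γ : Finset (Fin (2*d+1))) ∩ α).card)) (2*((γ : Finset (Fin (2*d+1))) ∩ α).card + 1) := by
  set s := ((γ : Finset (Fin (2*d+1))) ∩ α).card with hs
  have hsd : s ≤ d := inter_card_le γ α
  obtain ⟨W1, hW1⟩ := upper1 hd γ (d - s) α (by omega)
  obtain ⟨W2, hW2⟩ := upper2 hd γ s α (by omega)
  have hle1 : (oddGraph d).dist γ α ≤ 2*(d - s) := le_trans (SimpleGraph.dist_le W1) hW1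
  have hle2 : (oddGraph d).dist γ α ≤ 2*s + 1 := le_trans (SimpleGraph.dist_le W2) hW2
  have hreach : (oddGraph d).Reachable γ α := ⟨W1⟩
  obtain ⟨p, hp⟩ := hreach.exists_walk_length_eq_dist
  have hlow := lower α γ p.reverse
  rw [SimpleGraph.Walk.length_reverse, hp] at hlow
  omega

lemma dset_eq (hd : 3 ≤ d) (m : ℕ) (hm : m = if Even d then d / 2 else (d + 1) / 2)
    (γ : OddVertex d) :
    {α : OddVertex d | (oddGraph d).dist γ α = d} =
      {α : OddVertex d |
        ((α : Finset (Fin (2*d+1))) ∩ (if Even d then (γ : Finset (Fin (2*d+1))) else (γ : Finset (Fin (2*d+1)))ᶜ)).card = m} := by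
  ext α
  simp only [Set.mem_setOf_eq]
  rw [dist_eq_min (by omega) γ α]
  set s := ((γ : Finset (Fin (2*d+1))) ∩ α).card with hs
  have hsd : s ≤ d := inter_card_le γ α
  by_cases hEv : Even d
  · rw [if_pos hEv] at hm ⊢
    rw [Finset.inter_comm, ← hs]
    obtain ⟨c, hc⟩ := hEv
    omega
  · rw [if_neg hEv] at hm ⊢
    have hcompl : ((α : Finset (Fin (2*d+1))) ∩ (γ : Finset (Fin (2*d+1)))ᶜ).card = d - s := by
      rw [← Finset.sdiff_eq_inter_compl]
      have := Finset.card_sdiff_add_card_inter (α : Finset (Fin (2*d+1))) (γ : Finset (Fin (2*d+1)))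
      rw [α.2, Finset.inter_comm, ← hs] at this
      omega
    rw [hcompl]
    rw [Nat.not_even_iff] at hEv
    omega

/-- The set of vertices whose trace on `P` has size `m`. -/
def Dm (P : Finset (Fin (2*d+1))) (m : ℕ) : Set (OddVertex d) :=
  {α : OddVertex d | ((α : Finset (Fin (2*d+1))) ∩ P).card = m}

section Half2
variable {P : Finset (Fin (2*d+1))}

lemma sdiff_card (α : OddVertex d) (hα : ((α : Finset (Fin (2*d+1))) ∩ P).card = m) :
    ((α : Finset (Fin (2*d+1))) \ P).card = d - m := by
  have h := Finset.card_inter_add_card_sdiff (α : Finset (Fin (2*d+1))) P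
  have h2 : (α : Finset (Fin (2*d+1))).card = d := α.2
  omega

lemma psdiff_card (hP : P.card = 2*m) (α : OddVertex d)
    (hα : ((α : Finset (Fin (2*d+1))) ∩ P).card = m) :
    (P \ ((α : Finset (Fin (2*d+1))) ∩ P)).card = m := by
  rw [Finset.card_sdiff_of_subset Finset.inter_subset_right, hP, hα]
  omega

lemma adj_iff (hd : 1 ≤ d) (hP : P.card = 2*m) {α β : OddVertex d}
    (hα : ((α : Finset (Fin (2*d+1))) ∩ P).card = m)
    (hβ : ((β : Finset (Fin (2*d+1))) ∩ P).card = m) :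
    (oddGraph d).Adj α β ↔
      ((β : Finset (Fin (2*d+1))) ∩ P = P \ ((α : Finset (Fin (2*d+1))) ∩ P) ∧
        Disjoint ((α : Finset (Fin (2*d+1))) \ P) ((β : Finset (Fin (2*d+1))) \ P)) := by
  set A := (α : Finset (Fin (2*d+1))) with hA
  set B := (β : Finset (Fin (2*d+1))) with hB
  constructor
  · intro h
    have hdisj := h.2
    constructor
    · apply Finset.eq_of_subset_of_card_le
      · intro z hz
        rw [Finset.mem_inter] at hz
        rw [Finset.mem_sdiff]
        refine ⟨hz.2, fun hzA => ?_⟩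
        exact (Finset.disjoint_left.mp hdisj (Finset.mem_inter.mp hzA).1) hz.1
      · rw [psdiff_card hP α hα, hβ]
    · exact hdisj.mono Finset.sdiff_subset Finset.sdiff_subset
  · rintro ⟨h1, h2⟩
    apply odd_adj hd
    rw [Finset.disjoint_left]
    intro z hzA hzB
    by_cases hzP : z ∈ P
    · have hzAP : z ∈ A ∩ P := Finset.mem_inter.mpr ⟨hzA, hzP⟩
      have hzBP : z ∈ B ∩ P := Finset.mem_inter.mpr ⟨hzB, hzP⟩
      rw [h1, Finset.mem_sdiff] at hzBP
      exact hzBP.2 hzAP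
    · exact Finset.disjoint_left.mp h2 (Finset.mem_sdiff.mpr ⟨hzA, hzP⟩)
        (Finset.mem_sdiff.mpr ⟨hzB, hzP⟩)

lemma nbr (hd : 1 ≤ d) (hP : P.card = 2*m) (hmd : m ≤ d) {α : OddVertex d}
    (hα : ((α : Finset (Fin (2*d+1))) ∩ P).card = m) {U : Finset (Fin (2*d+1))}
    (hUP : Disjoint U P) (hUA : Disjoint U ((α : Finset (Fin (2*d+1))) \ P))
    (hUc : U.card = d - m) :
    ∃ β : OddVertex d,
      (β : Finset (Fin (2*d+1))) ∩ P = P \ ((α : Finset (Fin (2*d+1))) ∩ P) ∧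
      (β : Finset (Fin (2*d+1))) \ P = U ∧ (oddGraph d).Adj α β := by
  set A := (α : Finset (Fin (2*d+1))) with hA
  set S := A ∩ P with hS
  have hPS : P \ S ⊆ P := Finset.sdiff_subset
  have hdisj : Disjoint (P \ S) U := hUP.symm.mono_left hPS
  have hcard : ((P \ S) ∪ U).card = d := by
    rw [Finset.card_union_of_disjoint hdisj, psdiff_card hP α hα, hUc]
    omega
  set β : OddVertex d := ⟨(P \ S) ∪ U, hcard⟩ with hβ
  have hBP : (β : Finset (Fin (2*d+1))) ∩ P = P \ S := by
    show ((P \ S) ∪ U) ∩ P = P \ S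
    rw [Finset.union_inter_distrib_right, Finset.inter_eq_left.mpr hPS,
      Finset.disjoint_iff_inter_eq_empty.mp hUP, Finset.union_empty]
  have hBσ : (β : Finset (Fin (2*d+1))) \ P = U := by
    show ((P \ S) ∪ U) \ P = U
    rw [Finset.union_sdiff_distrib, Finset.sdiff_eq_empty_iff_subset.mpr hPS,
      Finset.sdiff_eq_self_iff_disjoint.mpr hUP, Finset.empty_union]
  have hβcard : ((β : Finset (Fin (2*d+1))) ∩ P).card = m := by
    rw [hBP]; exact psdiff_card hP α hα
  refine ⟨β, hBP, hBσ, ?_⟩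
  exact (adj_iff hd hP hα hβcard).mpr ⟨hBP, by rw [hBσ]; exact hUA.symm⟩

lemma induce_adj_iff {s : Set (OddVertex d)} (u v : s) :
    ((oddGraph d).induce s).Adj u v ↔ (oddGraph d).Adj ↑u ↑v := by
  simp [SimpleGraph.comap_adj]

lemma mem_Dm (a : (Dm P m : Set (OddVertex d))) :
    (((a : OddVertex d) : Finset (Fin (2*d+1))) ∩ P).card = m := a.2

lemma decomp (α : OddVertex d) :
    ((α : Finset (Fin (2*d+1))) ∩ P) ∪ ((α : Finset (Fin (2*d+1))) \ P)
      = (α : Finset (Fin (2*d+1))) := by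
  ext z
  simp only [Finset.mem_union, Finset.mem_inter, Finset.mem_sdiff]
  tauto

lemma sdiff_erase_of_not_mem {γ : Type*} [DecidableEq γ] {s t : Finset γ} {x : γ}
    (hx : x ∉ s) : s \ t.erase x = s \ t := by
  ext z
  simp only [Finset.mem_sdiff, Finset.mem_erase]
  constructor
  · rintro ⟨hzs, h⟩
    exact ⟨hzs, fun hzt => h ⟨fun he => hx (he ▸ hzs), hzt⟩⟩
  · rintro ⟨hzs, h⟩
    exact ⟨hzs, fun hm => h hm.2⟩

lemma reach_same (hd : 1 ≤ d) (hP : P.card = 2*m) (hmd : m ≤ d) :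
    ∀ (r : ℕ) (a b : (Dm P m : Set (OddVertex d))),
      ((((b : OddVertex d) : Finset (Fin (2*d+1))) \ P) \
        (((a : OddVertex d) : Finset (Fin (2*d+1))) \ P)).card = r →
      ((a : OddVertex d) : Finset (Fin (2*d+1))) ∩ P
        = ((b : OddVertex d) : Finset (Fin (2*d+1))) ∩ P →
      ((oddGraph d).induce (Dm P m)).Reachable a b := by
  intro r
  induction r using Nat.strong_induction_on with
  | _ r ih =>
  intro a b hr heq
  set A := ((a : OddVertex d) : Finset (Fin (2*d+1))) with hA
  set B := ((b : OddVertex d) : Finset (Fin (2*d+1))) with hB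
  have haD : (A ∩ P).card = m := mem_Dm a
  have hbD : (B ∩ P).card = m := mem_Dm b
  have haσ : (A \ P).card = d - m := sdiff_card _ haD
  have hbσ : (B \ P).card = d - m := sdiff_card _ hbD
  rcases Nat.eq_zero_or_pos r with hr0 | hrpos
  · -- equal σ-parts, so a = b
    subst hr0
    rw [Finset.card_eq_zero, Finset.sdiff_eq_empty_iff_subset] at hr
    have hσeq : B \ P = A \ P := Finset.eq_of_subset_of_card_le hr (by omega)
    rw [hA, hB] at heq hσeq
    have hab : a = b := by
      apply Subtype.ext
      apply Subtype.ext
      rw [← decomp ((a : OddVertex d)), ← decomp ((b : OddVertex d)), heq, hσeq]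
    exact hab ▸ SimpleGraph.Reachable.refl a
  · -- swap one element of the σ-part
    have hy : ((B \ P) \ (A \ P)).Nonempty := by rw [← Finset.card_pos]; omega
    obtain ⟨y, hym⟩ := hy
    have hx : ((A \ P) \ (B \ P)).Nonempty := by
      rw [← Finset.card_pos]
      have h1 := Finset.card_sdiff_add_card_inter (A \ P) (B \ P)
      have h2 := Finset.card_sdiff_add_card_inter (B \ P) (A \ P)
      rw [Finset.inter_comm] at h2
      omega
    obtain ⟨x, hxm⟩ := hx
    rw [Finset.mem_sdiff] at hxm hym
    have hxAP : x ∈ A \ P := hxm.1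
    have hyBP : y ∈ B \ P := hym.1
    rw [Finset.mem_sdiff] at hxAP hyBP
    have hyA : y ∉ A := by
      intro hyA
      exact hym.2 (Finset.mem_sdiff.mpr ⟨hyA, hyBP.2⟩)
    have hxA : x ∈ A := hxAP.1
    have hA2 : A.card = d := (a : OddVertex d).2
    have hcard'' : (insert y (A.erase x)).card = d := by
      rw [Finset.card_insert_of_notMem (by simp [hyA]), Finset.card_erase_of_mem hxA, hA2]
      omega
    set α'' : OddVertex d := ⟨insert y (A.erase x), hcard''⟩ with hα''def
    have hA''P : (α'' : Finset (Fin (2*d+1))) ∩ P = A ∩ P := by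
      ext z
      simp only [hα''def, Finset.mem_inter, Finset.mem_insert, Finset.mem_erase]
      constructor
      · rintro ⟨(rfl | ⟨hzx, hzA⟩), hzP⟩
        · exact absurd hzP hyBP.2
        · exact ⟨hzA, hzP⟩
      · rintro ⟨hzA, hzP⟩
        exact ⟨Or.inr ⟨fun h => hxAP.2 (h ▸ hzP), hzA⟩, hzP⟩
    have hA''σ : (α'' : Finset (Fin (2*d+1))) \ P = insert y ((A \ P).erase x) := by
      ext z
      simp only [hα''def, Finset.mem_sdiff, Finset.mem_insert, Finset.mem_erase]
      constructor
      · rintro ⟨(rfl | ⟨hzx, hzA⟩), hzP⟩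
        · exact Or.inl rfl
        · exact Or.inr ⟨hzx, hzA, hzP⟩
      · rintro (rfl | ⟨hzx, hzA, hzP⟩)
        · exact ⟨Or.inl rfl, hyBP.2⟩
        · exact ⟨Or.inr ⟨hzx, hzA⟩, hzP⟩
    have hα''D : α'' ∈ Dm P m := by
      show ((α'' : Finset (Fin (2*d+1))) ∩ P).card = m
      rw [hA''P]; exact haD
    -- the common neighbour
    set W0 : Finset (Fin (2*d+1)) := insert y (A \ P) with hW0
    have hW0sub : W0 ⊆ Pᶜ := by
      intro z hz
      rw [Finset.mem_compl]
      rcases Finset.mem_insert.mp hz with rfl | hz2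
      · exact hyBP.2
      · exact (Finset.mem_sdiff.mp hz2).2
    have hW0card : W0.card = (d - m) + 1 := by
      rw [hW0, Finset.card_insert_of_notMem (fun h => hym.2 h), haσ]
    set U0 : Finset (Fin (2*d+1)) := Pᶜ \ W0 with hU0
    have hU0card : U0.card = d - m := by
      rw [hU0, Finset.card_sdiff_of_subset hW0sub, Finset.card_compl, Fintype.card_fin, hP, hW0card]
      omega
    have hU0P : Disjoint U0 P := by
      rw [Finset.disjoint_left]
      intro z hz
      have := (Finset.mem_sdiff.mp hz).1
      rwa [Finset.mem_compl] at this
    have hU0W0 : Disjoint U0 W0 := by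
      rw [Finset.disjoint_left]
      intro z hz
      exact (Finset.mem_sdiff.mp hz).2
    have hU0A : Disjoint U0 (A \ P) :=
      hU0W0.mono_right (by rw [hW0]; exact Finset.subset_insert _ _)
    obtain ⟨β, hβ1, hβ2, hβ3⟩ := nbr hd hP hmd haD hU0P hU0A hU0card
    have hβD : β ∈ Dm P m := by
      show ((β : Finset (Fin (2*d+1))) ∩ P).card = m
      rw [hβ1]; exact psdiff_card hP _ haD
    have hβcard : ((β : Finset (Fin (2*d+1))) ∩ P).card = m := hβD
    have hα''β : (oddGraph d).Adj α'' β := by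
      refine (adj_iff hd hP hα''D hβcard).mpr ⟨?_, ?_⟩
      · rw [hβ1, hA''P]
      · rw [hβ2, hA''σ]
        refine (hU0W0.mono_right ?_).symm
        rw [hW0]
        intro z hz
        rcases Finset.mem_insert.mp hz with rfl | hz2
        · exact Finset.mem_insert_self _ _
        · exact Finset.mem_insert_of_mem (Finset.erase_subset _ _ hz2)
    -- measure decreases
    have hmeas : ((B \ P) \ ((α'' : Finset (Fin (2*d+1))) \ P)).card = r - 1 := by
      have hset : (B \ P) \ ((α'' : Finset (Fin (2*d+1))) \ P)
          = ((B \ P) \ (A \ P)).erase y := by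
        rw [hA''σ, Finset.sdiff_insert, sdiff_erase_of_not_mem hxm.2]
      rw [hset, Finset.card_erase_of_mem (Finset.mem_sdiff.mpr hym), hr]
    have hreach : ((oddGraph d).induce (Dm P m)).Reachable ⟨α'', hα''D⟩ b := by
      apply ih (r-1) (by omega) ⟨α'', hα''D⟩ b hmeas
      show (α'' : Finset (Fin (2*d+1))) ∩ P = B ∩ P
      rw [hA''P, ← heq]
    have h1 : ((oddGraph d).induce (Dm P m)).Adj a ⟨β, hβD⟩ :=
      (induce_adj_iff _ _).mpr hβ3
    have h2 : ((oddGraph d).induce (Dm P m)).Adj ⟨α'', hα''D⟩ ⟨β, hβD⟩ :=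
      (induce_adj_iff _ _).mpr hα''β
    exact (h1.reachable.trans h2.reachable.symm).trans hreach

lemma reach_opp (hd : 1 ≤ d) (hP : P.card = 2*m) (hmd : m ≤ d)
    (a b : (Dm P m : Set (OddVertex d)))
    (h : ((b : OddVertex d) : Finset (Fin (2*d+1))) ∩ P
        = P \ (((a : OddVertex d) : Finset (Fin (2*d+1))) ∩ P)) :
    ((oddGraph d).induce (Dm P m)).Reachable a b := by
  set A := ((a : OddVertex d) : Finset (Fin (2*d+1))) with hA
  have haD : (A ∩ P).card = m := mem_Dm a
  have haσ : (A \ P).card = d - m := sdiff_card _ haD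
  have hAσsub : A \ P ⊆ Pᶜ := by
    intro z hz
    rw [Finset.mem_compl]
    exact (Finset.mem_sdiff.mp hz).2
  have hbig : d - m ≤ (Pᶜ \ (A \ P)).card := by
    rw [Finset.card_sdiff_of_subset hAσsub, Finset.card_compl, Fintype.card_fin, hP, haσ]
    omega
  obtain ⟨U, hU1, hU2⟩ := Finset.exists_subset_card_eq hbig
  have hUP : Disjoint U P := by
    rw [Finset.disjoint_left]
    intro z hz
    have := (Finset.mem_sdiff.mp (hU1 hz)).1
    rwa [Finset.mem_compl] at this
  have hUA : Disjoint U (A \ P) := by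
    rw [Finset.disjoint_left]
    intro z hz
    exact (Finset.mem_sdiff.mp (hU1 hz)).2
  obtain ⟨β, hβ1, hβ2, hβ3⟩ := nbr hd hP hmd haD hUP hUA hU2
  have hβD : β ∈ Dm P m := by
    show ((β : Finset (Fin (2*d+1))) ∩ P).card = m
    rw [hβ1]; exact psdiff_card hP _ haD
  have h1 : ((oddGraph d).induce (Dm P m)).Adj a ⟨β, hβD⟩ :=
    (induce_adj_iff _ _).mpr hβ3
  refine h1.reachable.trans ?_
  apply reach_same hd hP hmd
    (((((b : OddVertex d) : Finset (Fin (2*d+1))) \ P) \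
      ((β : Finset (Fin (2*d+1))) \ P)).card) ⟨β, hβD⟩ b rfl
  show (β : Finset (Fin (2*d+1))) ∩ P = ((b : OddVertex d) : Finset (Fin (2*d+1))) ∩ P
  rw [hβ1, h]
end Half2

section Half3
variable {P : Finset (Fin (2*d+1))}

lemma mem_Dm' (a : (Dm P m : Set (OddVertex d))) :
    (((a : OddVertex d) : Finset (Fin (2*d+1))) ∩ P).card = m := a.2

/-- canonical representative of the pair {S, P \ S}. -/
def canon (P : Finset (Fin (2*d+1))) (x₀ : Fin (2*d+1)) (α : OddVertex d) :
    Finset (Fin (2*d+1)) :=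
  if x₀ ∈ (α : Finset (Fin (2*d+1))) ∩ P then (α : Finset (Fin (2*d+1))) ∩ P
  else P \ ((α : Finset (Fin (2*d+1))) ∩ P)

lemma cancel {S : Finset (Fin (2*d+1))} (h : S ⊆ P) : P \ (P \ S) = S := by
  rw [Finset.sdiff_sdiff_self_left]
  exact Finset.inter_eq_right.mpr h

lemma canon_cases {x₀ : Fin (2*d+1)} (α : OddVertex d) :
    canon P x₀ α = (α : Finset (Fin (2*d+1))) ∩ P ∨
      canon P x₀ α = P \ ((α : Finset (Fin (2*d+1))) ∩ P) := by
  unfold canon; split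
  exacts [Or.inl rfl, Or.inr rfl]

lemma canon_spec {x₀ : Fin (2*d+1)} (hx₀ : x₀ ∈ P) (hP : P.card = 2*m) (α : OddVertex d)
    (hα : ((α : Finset (Fin (2*d+1))) ∩ P).card = m) :
    canon P x₀ α ⊆ P ∧ (canon P x₀ α).card = m ∧ x₀ ∈ canon P x₀ α := by
  unfold canon
  split
  case isTrue h => exact ⟨Finset.inter_subset_right, hα, h⟩
  case isFalse h =>
    exact ⟨Finset.sdiff_subset, psdiff_card hP α hα, Finset.mem_sdiff.mpr ⟨hx₀, h⟩⟩

lemma canon_adj (hd : 1 ≤ d) (hP : P.card = 2*m) {x₀ : Fin (2*d+1)} (hx₀ : x₀ ∈ P)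
    {α β : OddVertex d}
    (hα : ((α : Finset (Fin (2*d+1))) ∩ P).card = m)
    (hβ : ((β : Finset (Fin (2*d+1))) ∩ P).card = m)
    (h : (oddGraph d).Adj α β) : canon P x₀ α = canon P x₀ β := by
  have hBP := ((adj_iff hd hP hα hβ).mp h).1
  unfold canon
  by_cases hx : x₀ ∈ (α : Finset (Fin (2*d+1))) ∩ P
  · have hx2 : x₀ ∉ (β : Finset (Fin (2*d+1))) ∩ P := by
      rw [hBP, Finset.mem_sdiff]
      exact fun hc => hc.2 hx
    rw [if_pos hx, if_neg hx2, hBP, cancel Finset.inter_subset_right]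
  · have hx2 : x₀ ∈ (β : Finset (Fin (2*d+1))) ∩ P := by
      rw [hBP, Finset.mem_sdiff]
      exact ⟨hx₀, hx⟩
    rw [if_neg hx, if_pos hx2, hBP]

lemma choose_half {m : ℕ} (hm : 1 ≤ m) : (2*m - 1).choose (m - 1) = (2*m).choose m / 2 := by
  obtain ⟨m', rfl⟩ : ∃ m', m = m' + 1 := ⟨m - 1, by omega⟩
  have h2 : (2*(m'+1)).choose (m'+1) = (2*m'+1).choose m' + (2*m'+1).choose (m'+1) := by
    have := Nat.choose_succ_succ' (2*m'+1) m'
    rw [show 2*(m'+1) = (2*m'+1)+1 by ring]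
    exact this
  have h3 : (2*m'+1).choose (m'+1) = (2*m'+1).choose m' := by
    have h := Nat.choose_symm (show m'+1 ≤ 2*m'+1 by omega)
    rw [show 2*m'+1-(m'+1) = m' by omega] at h
    exact h.symm
  rw [show 2*(m'+1)-1 = 2*m'+1 by omega, show (m'+1)-1 = m' by omega, h2, h3]
  omega

/-- the invariant map on vertices of the subconstituent. -/
def fmap (P : Finset (Fin (2*d+1))) (x₀ : Fin (2*d+1)) (hx₀ : x₀ ∈ P) (hP : P.card = 2*m)
    (a : (Dm P m : Set (OddVertex d))) :
    {S : Finset (Fin (2*d+1)) // S ⊆ P ∧ S.card = m ∧ x₀ ∈ S} :=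
  ⟨canon P x₀ ↑a, canon_spec hx₀ hP _ (mem_Dm' a)⟩

lemma fmap_walk (hd : 1 ≤ d) {P : Finset (Fin (2*d+1))} (x₀ : Fin (2*d+1)) (hx₀ : x₀ ∈ P)
    (hP : P.card = 2*m) :
    ∀ (u v : (Dm P m : Set (OddVertex d)))
      (_ : ((oddGraph d).induce (Dm P m)).Walk u v),
      fmap P x₀ hx₀ hP u = fmap P x₀ hx₀ hP v := by
  intro u v p
  induction p with
  | nil => rfl
  | cons h p ih =>
    refine Eq.trans ?_ ih
    apply Subtype.ext
    exact canon_adj hd hP hx₀ (mem_Dm' _) (mem_Dm' _) ((induce_adj_iff _ _).mp h)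

/-- the invariant map on connected components. -/
def Φmap (hd : 1 ≤ d) (P : Finset (Fin (2*d+1))) (x₀ : Fin (2*d+1)) (hx₀ : x₀ ∈ P)
    (hP : P.card = 2*m) :
    ((oddGraph d).induce (Dm P m)).ConnectedComponent →
      {S : Finset (Fin (2*d+1)) // S ⊆ P ∧ S.card = m ∧ x₀ ∈ S} :=
  SimpleGraph.ConnectedComponent.lift (fmap P x₀ hx₀ hP)
    (fun u v p _ => fmap_walk hd x₀ hx₀ hP u v p)

lemma Φmap_mk (hd : 1 ≤ d) {P : Finset (Fin (2*d+1))} (x₀ : Fin (2*d+1)) (hx₀ : x₀ ∈ P)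
    (hP : P.card = 2*m) (a : (Dm P m : Set (OddVertex d))) :
    Φmap hd P x₀ hx₀ hP (((oddGraph d).induce (Dm P m)).connectedComponentMk a)
      = fmap P x₀ hx₀ hP a := rfl

lemma Φmap_bij (hd : 1 ≤ d) {P : Finset (Fin (2*d+1))} (x₀ : Fin (2*d+1)) (hx₀ : x₀ ∈ P)
    (hP : P.card = 2*m) (hmd : m ≤ d) :
    Function.Bijective (Φmap hd P x₀ hx₀ hP) := by
  constructor
  · intro c c'
    refine SimpleGraph.ConnectedComponent.ind₂
      (β := fun c c' => Φmap hd P x₀ hx₀ hP c = Φmap hd P x₀ hx₀ hP c' → c = c')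
      (fun u v h => ?_) c c'
    rw [Φmap_mk, Φmap_mk] at h
    have hc : canon P x₀ ↑u = canon P x₀ ↑v := congrArg Subtype.val h
    have hu := mem_Dm' u
    have hv := mem_Dm' v
    apply SimpleGraph.ConnectedComponent.sound
    rcases canon_cases (P := P) (x₀ := x₀) (↑u : OddVertex d) with h1 | h1 <;>
      rcases canon_cases (P := P) (x₀ := x₀) (↑v : OddVertex d) with h2 | h2 <;>
      rw [h1, h2] at hc
    · exact reach_same hd hP hmd _ u v rfl hc
    · refine reach_opp hd hP hmd u v ?_
      rw [hc, cancel Finset.inter_subset_right]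
    · refine (reach_opp hd hP hmd v u ?_).symm
      rw [← hc, cancel Finset.inter_subset_right]
    · refine reach_same hd hP hmd _ u v rfl ?_
      have := congrArg (fun T => P \ T) hc
      rwa [cancel Finset.inter_subset_right, cancel Finset.inter_subset_right] at this
  · rintro ⟨S, hSP, hSc, hSx⟩
    have hUbig : d - m ≤ Pᶜ.card := by
      rw [Finset.card_compl, Fintype.card_fin, hP]; omega
    obtain ⟨U, hU1, hU2⟩ := Finset.exists_subset_card_eq hUbig
    have hSU : Disjoint S U := by
      rw [Finset.disjoint_left]
      intro z hz hzU
      exact (Finset.mem_compl.mp (hU1 hzU)) (hSP hz)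
    have hcard : (S ∪ U).card = d := by
      rw [Finset.card_union_of_disjoint hSU, hSc, hU2]; omega
    have hAP : ((⟨S ∪ U, hcard⟩ : OddVertex d) : Finset (Fin (2*d+1))) ∩ P = S := by
      show (S ∪ U) ∩ P = S
      rw [Finset.union_inter_distrib_right, Finset.inter_eq_left.mpr hSP]
      have hUP : U ∩ P = ∅ := by
        rw [← Finset.disjoint_iff_inter_eq_empty, Finset.disjoint_left]
        intro z hzU
        exact Finset.mem_compl.mp (hU1 hzU)
      rw [hUP, Finset.union_empty]
    have hαD : (⟨S ∪ U, hcard⟩ : OddVertex d) ∈ Dm P m := by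
      show (((⟨S ∪ U, hcard⟩ : OddVertex d) : Finset (Fin (2*d+1))) ∩ P).card = m
      rw [hAP]; exact hSc
    refine ⟨((oddGraph d).induce (Dm P m)).connectedComponentMk ⟨_, hαD⟩, ?_⟩
    rw [Φmap_mk]
    apply Subtype.ext
    show canon P x₀ _ = S
    unfold canon
    rw [hAP, if_pos hSx]

lemma count_components (hd : 1 ≤ d) {P : Finset (Fin (2*d+1))} (hP : P.card = 2*m)
    (hm1 : 1 ≤ m) (hmd : m ≤ d) :
    Nat.card ((oddGraph d).induce (Dm P m)).ConnectedComponent = (2*m).choose m / 2 := by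
  have hPne : 0 < P.card := by omega
  obtain ⟨x₀, hx₀⟩ := Finset.card_pos.mp hPne
  have h1 : Nat.card ((oddGraph d).induce (Dm P m)).ConnectedComponent
      = Nat.card {S : Finset (Fin (2*d+1)) // S ⊆ P ∧ S.card = m ∧ x₀ ∈ S} :=
    Nat.card_congr (Equiv.ofBijective _ (Φmap_bij hd x₀ hx₀ hP hmd))
  have e2 : {S : Finset (Fin (2*d+1)) // S ⊆ P ∧ S.card = m ∧ x₀ ∈ S}
      ≃ {T : Finset (Fin (2*d+1)) // T ∈ (P.erase x₀).powersetCard (m-1)} :=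
    { toFun := fun S => ⟨S.1.erase x₀, Finset.mem_powersetCard.mpr
        ⟨Finset.erase_subset_erase x₀ S.2.1,
          by rw [Finset.card_erase_of_mem S.2.2.2, S.2.2.1]⟩⟩
      invFun := fun T => ⟨insert x₀ T.1, by
        have hT := Finset.mem_powersetCard.mp T.2
        have hx₀T : x₀ ∉ T.1 := fun h => (Finset.mem_erase.mp (hT.1 h)).1 rfl
        refine ⟨Finset.insert_subset hx₀ (hT.1.trans (Finset.erase_subset _ _)),
          ?_, Finset.mem_insert_self _ _⟩
        rw [Finset.card_insert_of_notMem hx₀T, hT.2]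
        omega⟩
      left_inv := fun S => Subtype.ext (Finset.insert_erase S.2.2.2)
      right_inv := fun T => Subtype.ext (Finset.erase_insert
        (fun h => (Finset.mem_erase.mp ((Finset.mem_powersetCard.mp T.2).1 h)).1 rfl)) }
  rw [h1, Nat.card_congr e2, Nat.card_eq_finsetCard, Finset.card_powersetCard,
    Finset.card_erase_of_mem hx₀, hP]
  exact choose_half hm1
end Half3

end OddAux

/-- the number of connected components of the `d`-th subconstituent of the
Odd graph `O_{d+1}` (`d ≥ 3`) with respect to any vertex equals `C(2m, m)/2`, where
`m = d/2` for even `d` and `m = (d+1)/2` for odd `d`. -/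
theorem oddGraph_last_subconstituent_card_components (d : ℕ) (hd : 3 ≤ d) (m : ℕ)
    (hm : m = if Even d then d / 2 else (d + 1) / 2) (γ : OddVertex d) :
    Nat.card ((oddGraph d).induce {α : OddVertex d | (oddGraph d).dist γ α = d}).ConnectedComponent
      = (2 * m).choose m / 2 := by
  have hd1 : 1 ≤ d := by omega
  have hP2 : (if Even d then (γ : Finset (Fin (2*d+1)))
      else (γ : Finset (Fin (2*d+1)))ᶜ).card = 2*m ∧ 1 ≤ m ∧ m ≤ d := by
    rcases Nat.even_or_odd d with he | ho
    · rw [if_pos he]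
      rw [if_pos he] at hm
      have h0 := Nat.even_iff.mp he
      have hγ := γ.2
      refine ⟨?_, ?_, ?_⟩ <;> omega
    · have hne : ¬ Even d := Nat.not_even_iff_odd.mpr ho
      rw [if_neg hne]
      rw [if_neg hne] at hm
      have h0 := Nat.odd_iff.mp ho
      rw [Finset.card_compl, Fintype.card_fin, γ.2]
      refine ⟨?_, ?_, ?_⟩ <;> omega
  rw [OddAux.dset_eq hd m hm γ]
  exact OddAux.count_components hd1 hP2.1 hP2.2.1 hP2.2.2
end

section
/- Let d ≥ 3 and let Γ be the Odd graph O_{d+1}. For any vertex γ of Γ, the subgraph of Γ induced on Γ_d(γ) is not connected. -/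
open Finset

/-!
Write `j = #(γ ∩ α)`. Along an edge `α ~ β` the sets `α, β` are disjoint and miss exactly one
point, so `#(γ ∩ β) ∈ {d - j - 1, d - j}`; hence every walk from `α` to `γ` has length at least
`min (2 (d - j)) (2 j + 1)`, and swapping one point at a time shows this bound is attained.
So `Γ_d(γ)` consists of the `α` with `j = ⌊d/2⌋`, i.e. with `#(α ∩ S) = k` where `S = γ, k = d/2`
for even `d` and `S = γᶜ, k = (d + 1)/2` for odd `d`; in both cases `#S = 2k`.
Adjacent vertices of such a level meet `S` in complementary halves, so for `x, y ∈ S` the truth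
value of `x ∈ α ↔ y ∈ α` is constant on components, while for `k ≥ 2` both values occur.
-/

namespace OddVertex

variable {d : ℕ}

lemma card_compl (α : OddVertex d) : #α.1ᶜ = d + 1 := by
  rw [Finset.card_compl, Fintype.card_fin, α.2]
  omega

lemma card_inter_le (γ α : OddVertex d) : #(γ.1 ∩ α.1) ≤ d :=
  (card_le_card inter_subset_left).trans_eq γ.2

lemma eq_of_card_inter_eq {γ α : OddVertex d} (h : #(γ.1 ∩ α.1) = d) : γ = α := by
  have hsub : γ.1 ⊆ α.1 :=
    inter_eq_left.mp (eq_of_subset_of_card_le inter_subset_left (by rw [h, γ.2]))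
  exact Subtype.ext (eq_of_subset_of_card_le hsub (by rw [α.2, γ.2]))

lemma exists_between {A B : Finset (Fin (2 * d + 1))} (hAB : A ⊆ B) (hA : #A ≤ d)
    (hB : d ≤ #B) : ∃ α : OddVertex d, A ⊆ α.1 ∧ α.1 ⊆ B := by
  obtain ⟨s, hAs, hsB, hs⟩ := exists_subsuperset_card_eq hAB hA hB
  exact ⟨⟨s, hs⟩, hAs, hsB⟩

end OddVertex

open OddVertex SimpleGraph

variable {d : ℕ}

lemma oddGraph_adj_of_disjoint (hd : 0 < d) {α β : OddVertex d} (h : Disjoint α.1 β.1) :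
    (oddGraph d).Adj α β := by
  refine ⟨fun hαβ => ?_, h⟩
  subst hαβ
  have hcard := α.2
  rw [disjoint_self.mp h, bot_eq_empty, card_empty] at hcard
  omega

lemma card_inter_add_card_inter_of_adj (γ : OddVertex d) {α β : OddVertex d}
    (h : (oddGraph d).Adj α β) :
    #(γ.1 ∩ α.1) + #(γ.1 ∩ β.1) ≤ d ∧ d ≤ #(γ.1 ∩ α.1) + #(γ.1 ∩ β.1) + 1 := by
  have hsplit : #(γ.1 ∩ α.1) + #(γ.1 ∩ β.1) = #(γ.1 ∩ (α.1 ∪ β.1)) := by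
    rw [inter_union_distrib_left,
      card_union_of_disjoint (h.2.mono inter_subset_right inter_subset_right)]
  have hunion : #(α.1 ∪ β.1) = 2 * d := by
    rw [card_union_of_disjoint h.2, α.2, β.2]
    ring
  -- `α ∪ β` misses a single point of the `(2d+1)`-set.
  have hmiss : #(γ.1 \ (α.1 ∪ β.1)) ≤ 1 :=
    calc #(γ.1 \ (α.1 ∪ β.1)) ≤ #(α.1 ∪ β.1)ᶜ := by
          rw [sdiff_eq_inter_compl]
          exact card_le_card inter_subset_right
      _ = 1 := by rw [Finset.card_compl, Fintype.card_fin, hunion]; omega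
  have hγ := card_sdiff_add_card_inter γ.1 (α.1 ∪ β.1)
  have hle := card_le_card (inter_subset_left : γ.1 ∩ (α.1 ∪ β.1) ⊆ γ.1)
  rw [γ.2] at hγ hle
  omega

lemma min_le_walk_length {α γ : OddVertex d} (p : (oddGraph d).Walk α γ) :
    min (2 * (d - #(γ.1 ∩ α.1))) (2 * #(γ.1 ∩ α.1) + 1) ≤ p.length := by
  induction p with
  | @nil α => simp [α.2]
  | @cons α β γ h q ih =>
    have := card_inter_add_card_inter_of_adj γ h
    have := card_inter_le γ α
    have := card_inter_le γ β
    rw [Walk.length_cons]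
    omega

lemma exists_walk_length_eq_two (hd : 0 < d) {α β : OddVertex d} (h : #(α.1 ∪ β.1) ≤ d + 1) :
    ∃ p : (oddGraph d).Walk α β, p.length = 2 := by
  have hcompl : d ≤ #(α.1 ∪ β.1)ᶜ := by
    rw [Finset.card_compl, Fintype.card_fin]
    omega
  obtain ⟨μ, -, hμ⟩ := exists_between (empty_subset _) (by simp) hcompl
  have hαμ : Disjoint α.1 μ.1 := (disjoint_compl_right.mono_left subset_union_left).mono_right hμ
  have hμβ : Disjoint μ.1 β.1 :=
    ((disjoint_compl_right.mono_left subset_union_right).mono_right hμ).symm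
  exact ⟨.cons (oddGraph_adj_of_disjoint hd hαμ) (.cons (oddGraph_adj_of_disjoint hd hμβ) .nil),
    rfl⟩

lemma exists_walk_length_le_two_mul_sub (hd : 0 < d) (γ α : OddVertex d) :
    ∃ p : (oddGraph d).Walk γ α, p.length ≤ 2 * (d - #(γ.1 ∩ α.1)) := by
  by_cases hj : #(γ.1 ∩ α.1) = d
  · rw [eq_of_card_inter_eq hj]
    exact ⟨.nil, by simp⟩
  have hj' := card_inter_le γ α
  obtain ⟨y, hy⟩ : (γ.1 \ α.1).Nonempty := by
    rw [← card_pos]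
    have := card_sdiff_add_card_inter γ.1 α.1
    rw [γ.2] at this
    omega
  have hyα : y ∉ α.1 := (mem_sdiff.mp hy).2
  have hyγα : y ∉ γ.1 ∩ α.1 := fun h => hyα (mem_inter.mp h).2
  -- Exchange one point of `α \ γ` for `y ∈ γ \ α`.
  obtain ⟨α', hα'γ, hα'α⟩ := exists_between (A := insert y (γ.1 ∩ α.1)) (B := insert y α.1)
    (insert_subset_insert _ inter_subset_right)
    (by rw [card_insert_of_notMem hyγα]; omega)
    (by rw [card_insert_of_notMem hyα, α.2]; omega)
  have hcloser : #(γ.1 ∩ α.1) + 1 ≤ #(γ.1 ∩ α'.1) := by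
    rw [← card_insert_of_notMem hyγα]
    exact card_le_card (subset_inter (insert_subset (mem_sdiff.mp hy).1 inter_subset_left) hα'γ)
  obtain ⟨p, hp⟩ := exists_walk_length_le_two_mul_sub hd γ α'
  obtain ⟨q, hq⟩ := exists_walk_length_eq_two hd (α := α') (β := α)
    ((card_le_card (union_subset hα'α (subset_insert _ _))).trans
      (by rw [card_insert_of_notMem hyα, α.2]))
  refine ⟨p.append q, ?_⟩
  rw [Walk.length_append]
  omega
termination_by d - #(γ.1 ∩ α.1)
decreasing_by omega

lemma exists_walk_length_le_two_mul_add_one (hd : 0 < d) (γ α : OddVertex d) :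
    ∃ p : (oddGraph d).Walk γ α, p.length ≤ 2 * #(γ.1 ∩ α.1) + 1 := by
  have hsplit := card_sdiff_add_card_inter γ.1 α.1
  rw [γ.2] at hsplit
  obtain ⟨ν, hγν, hνcompl⟩ := exists_between (A := γ.1 \ α.1) (B := α.1ᶜ)
    (by rw [sdiff_eq_inter_compl]; exact inter_subset_right) (by omega)
    (by rw [OddVertex.card_compl]; omega)
  have hfar : d - #(γ.1 ∩ α.1) ≤ #(γ.1 ∩ ν.1) := by
    have := card_le_card (subset_inter sdiff_subset hγν)
    omega
  obtain ⟨p, hp⟩ := exists_walk_length_le_two_mul_sub hd γ ν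
  have hνα : (oddGraph d).Adj ν α :=
    oddGraph_adj_of_disjoint hd (disjoint_compl_left.mono_left hνcompl)
  refine ⟨p.concat hνα, ?_⟩
  rw [Walk.length_concat]
  have := card_inter_le γ ν
  omega

theorem oddGraph_dist_eq (hd : 0 < d) (γ α : OddVertex d) :
    (oddGraph d).dist γ α = min (2 * (d - #(γ.1 ∩ α.1))) (2 * #(γ.1 ∩ α.1) + 1) := by
  obtain ⟨p, hp⟩ := exists_walk_length_le_two_mul_sub hd γ α
  obtain ⟨q, hq⟩ := exists_walk_length_le_two_mul_add_one hd γ α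
  obtain ⟨r, hr⟩ := p.reachable.exists_walk_length_eq_dist
  have hlower := min_le_walk_length r.reverse
  rw [Walk.length_reverse, hr] at hlower
  have := dist_le p
  have := dist_le q
  omega

lemma oddGraph_dist_eq_self_iff (hd : 0 < d) (γ α : OddVertex d) :
    (oddGraph d).dist γ α = d ↔ #(γ.1 ∩ α.1) = d / 2 := by
  rw [oddGraph_dist_eq hd]
  have := card_inter_le γ α
  omega

section Level

variable {S : Finset (Fin (2 * d + 1))} {k : ℕ}

lemma inter_eq_sdiff_of_adj (hS : #S = 2 * k) {α β : OddVertex d} (hα : #(α.1 ∩ S) = k)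
    (hβ : #(β.1 ∩ S) = k) (h : (oddGraph d).Adj α β) : β.1 ∩ S = S \ α.1 := by
  refine eq_of_subset_of_card_le (fun x hx => ?_) ?_
  · obtain ⟨hxβ, hxS⟩ := mem_inter.mp hx
    exact mem_sdiff.mpr ⟨hxS, fun hxα => disjoint_left.mp h.2 hxα hxβ⟩
  · have := card_sdiff_add_card_inter S α.1
    rw [inter_comm] at hα
    omega

lemma iff_mem_iff_of_reachable (hS : #S = 2 * k) {x y : Fin (2 * d + 1)} (hx : x ∈ S) (hy : y ∈ S)
    {a b : {α : OddVertex d | #(α.1 ∩ S) = k}}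
    (h : ((oddGraph d).induce {α : OddVertex d | #(α.1 ∩ S) = k}).Reachable a b) :
    (x ∈ a.1.1 ↔ y ∈ a.1.1) ↔ (x ∈ b.1.1 ↔ y ∈ b.1.1) := by
  obtain ⟨p⟩ := h
  induction p with
  | nil => rfl
  | @cons a b c h q ih =>
    have hflip := Finset.ext_iff.mp (inter_eq_sdiff_of_adj hS a.2 b.2 h)
    have hfx := hflip x
    have hfy := hflip y
    simp only [mem_inter, mem_sdiff, hx, hy, and_true, true_and] at hfx hfy
    rw [← ih]
    tauto

lemma exists_inter_eq {A : Finset (Fin (2 * d + 1))} (hAS : A ⊆ S) (hA : #A ≤ d)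
    (hd : d ≤ #A + #Sᶜ) : ∃ α : OddVertex d, α.1 ∩ S = A := by
  have hdisj : Disjoint A Sᶜ := disjoint_compl_right.mono_left hAS
  obtain ⟨α, hAα, hαA⟩ := exists_between (subset_union_left : A ⊆ A ∪ Sᶜ) hA
    (by rwa [card_union_of_disjoint hdisj])
  refine ⟨α, Finset.ext fun x => ⟨fun hx => ?_, fun hx => mem_inter.mpr ⟨hAα hx, hAS hx⟩⟩⟩
  obtain ⟨hxα, hxS⟩ := mem_inter.mp hx
  simpa [hxS] using hαA hxα

theorem not_connected_induce_card_inter_eq (hS : #S = 2 * k) (hk : 2 ≤ k) (hkd : k ≤ d)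
    (hdk : d ≤ k + #Sᶜ) :
    ¬ ((oddGraph d).induce {α : OddVertex d | #(α.1 ∩ S) = k}).Connected := by
  intro hconn
  obtain ⟨x, hx, y, hy, hxy⟩ := one_lt_card.mp (by omega : 1 < #S)
  obtain ⟨A, hxyA, hAS, hA⟩ := exists_subsuperset_card_eq (s := {x, y}) (insert_subset hx
    (singleton_subset_iff.mpr hy)) (card_le_two.trans hk) (by omega)
  obtain ⟨B, hxB, hBS, hB⟩ := exists_subsuperset_card_eq (s := {x}) (n := k)
    (singleton_subset_iff.mpr (mem_erase.mpr ⟨hxy, hx⟩)) (by rw [card_singleton]; omega)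
    (by rw [card_erase_of_mem hy]; omega)
  obtain ⟨u, hu⟩ := exists_inter_eq hAS (hA ▸ hkd) (hA ▸ hdk)
  obtain ⟨v, hv⟩ := exists_inter_eq (hBS.trans (erase_subset _ _)) (hB ▸ hkd) (hB ▸ hdk)
  have hxu : x ∈ u.1 := (mem_inter.mp (hu ▸ hxyA (by simp))).1
  have hyu : y ∈ u.1 := (mem_inter.mp (hu ▸ hxyA (by simp))).1
  have hxv : x ∈ v.1 := (mem_inter.mp (hv ▸ hxB (by simp))).1
  have hyv : y ∉ v.1 := fun h => (mem_erase.mp (hBS (hv ▸ mem_inter.mpr ⟨h, hy⟩))).1 rfl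
  have := iff_mem_iff_of_reachable hS hx hy
    (hconn.preconnected ⟨u, show #(u.1 ∩ S) = k by rw [hu, hA]⟩
      ⟨v, show #(v.1 ∩ S) = k by rw [hv, hB]⟩)
  tauto

end Level

/-- the `d`-th subconstituent of the Odd graph `O_{d+1}` (`d ≥ 3`) with
respect to any vertex is not connected. -/
theorem oddGraph_last_subconstituent_not_connected (d : ℕ) (hd : 3 ≤ d) (γ : OddVertex d) :
    ¬ ((oddGraph d).induce {α : OddVertex d | (oddGraph d).dist γ α = d}).Connected := by
  have hlevel (α : OddVertex d) : (oddGraph d).dist γ α = d ↔ #(γ.1 ∩ α.1) = d / 2 :=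
    oddGraph_dist_eq_self_iff (by omega) γ α
  rcases Nat.even_or_odd' d with ⟨m, rfl | rfl⟩
  · have hS : {α | (oddGraph (2 * m)).dist γ α = 2 * m} = {α | #(α.1 ∩ γ.1) = m} :=
      Set.ext fun α => (hlevel α).trans (by rw [Set.mem_ofPred_eq, inter_comm]; omega)
    rw [hS]
    exact not_connected_induce_card_inter_eq (by rw [γ.2]) (by omega) (by omega)
      (by rw [OddVertex.card_compl]; omega)
  · have hS : {α | (oddGraph (2 * m + 1)).dist γ α = 2 * m + 1} = {α | #(α.1 ∩ γ.1ᶜ) = m + 1} :=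
      Set.ext fun α => (hlevel α).trans <| by
        have hsplit := card_sdiff_add_card_inter α.1 γ.1
        rw [α.2, sdiff_eq_inter_compl] at hsplit
        rw [Set.mem_ofPred_eq, inter_comm]
        omega
    rw [hS]
    exact not_connected_induce_card_inter_eq (by rw [OddVertex.card_compl]; ring) (by omega)
      (by omega) (by rw [compl_compl, γ.2]; omega)
end

section
/- Let d ≥ 3 and let Γ be the Odd graph O_{d+1}. For any vertex γ of Γ, |Γ_d(γ)| = C(d, m)·C(d+1, m), where m = d/2 if d is even and m = (d+1)/2 if d is odd. -/
/-!
In `O_{d+1}` the distance from `γ` to `α` depends only on the overlap `i = |γ ∩ α|` and equals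
`min (2(d - i)) (2i + 1)`. Two adjacent vertices `α, β` cover all but one point, so their
overlaps with `γ` add up to `d - 1` or `d`; this bounds every walk from below. Conversely every
overlap compatible with that constraint is realised by some neighbour, which yields walks of
both lengths. Hence `Γ_d(γ)` consists of the `α` with `|γ ∩ α| = ⌊d/2⌋`, and such an `α` is
a choice of `⌊d/2⌋` points of `γ` together with `d - ⌊d/2⌋` points of its `(d+1)`-element
complement.
-/

open Finset

open SimpleGraph

theorem card_filter_powersetCard_card_inter_eq {α : Type*} [DecidableEq α] (s u : Finset α)
    {i n : ℕ} (hi : i ≤ n) :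
    #{t ∈ powersetCard n u | #(s ∩ t) = i}
      = (#(s ∩ u)).choose i * (#(u \ s)).choose (n - i) := by
  rw [← card_powersetCard, ← card_powersetCard, ← card_product]
  refine card_nbij' (fun t => (s ∩ t, t \ s)) (fun p => p.1 ∪ p.2) ?_ ?_ ?_ ?_
  · intro t ht
    simp only [mem_coe, mem_filter, mem_product, mem_powersetCard] at ht ⊢
    obtain ⟨⟨htu, htn⟩, hti⟩ := ht
    have := card_sdiff_add_card_inter t s
    refine ⟨⟨inter_subset_inter_left htu, hti⟩, sdiff_subset_sdiff htu le_rfl, ?_⟩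
    rw [inter_comm] at this; omega
  · rintro ⟨a, b⟩ hab
    simp only [mem_coe, mem_filter, mem_product, mem_powersetCard] at hab ⊢
    obtain ⟨⟨has, rfl⟩, hbs, hbn⟩ := hab
    have hsb : Disjoint s b := disjoint_of_subset_right hbs disjoint_sdiff
    refine ⟨⟨union_subset (has.trans inter_subset_right) (hbs.trans sdiff_subset), ?_⟩, ?_⟩
    · rw [card_union_of_disjoint (hsb.mono_left (has.trans inter_subset_left))]; omega
    · rw [inter_union_distrib_left, inter_eq_right.2 (has.trans inter_subset_left),
        disjoint_iff_inter_eq_empty.1 hsb, union_empty]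
  · intro t _
    change s ∩ t ∪ t \ s = t
    rw [union_comm, inter_comm, sdiff_union_inter]
  · rintro ⟨a, b⟩ hab
    simp only [mem_coe, mem_product, mem_powersetCard] at hab
    obtain ⟨⟨has, -⟩, hbs, -⟩ := hab
    have hsb : Disjoint s b := disjoint_of_subset_right hbs disjoint_sdiff
    simp only [inter_union_distrib_left, union_sdiff_distrib,
      inter_eq_right.2 (has.trans inter_subset_left), disjoint_iff_inter_eq_empty.1 hsb,
      sdiff_eq_empty_iff_subset.2 (has.trans inter_subset_left), hsb.symm.sdiff_eq_left,
      union_empty, empty_union]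

theorem natCard_setOf_subtype_card_eq {ι : Type*} [Fintype ι] [DecidableEq ι] (n : ℕ)
    (P : Finset ι → Prop) [DecidablePred P] :
    Nat.card {s : {s : Finset ι // #s = n} | P s} = #{t ∈ powersetCard n univ | P t} := by
  rw [← Nat.card_eq_finsetCard]
  exact Nat.card_congr ((Equiv.subtypeSubtypeEquivSubtypeInter _ _).trans
    (Equiv.subtypeEquivRight fun t => by simp))

namespace OddGraph

variable {d : ℕ}

def overlap (γ α : OddVertex d) : ℕ := #(γ.1 ∩ α.1)

lemma card_compl_vertex (α : OddVertex d) : #(α.1ᶜ) = d + 1 := by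
  rw [card_compl, Fintype.card_fin, α.2]; omega

lemma overlap_le (γ α : OddVertex d) : overlap γ α ≤ d :=
  (card_le_card inter_subset_left).trans_eq γ.2

lemma overlap_self (γ : OddVertex d) : overlap γ γ = d := by
  simp [overlap, γ.2]

lemma eq_of_overlap_eq {γ α : OddVertex d} (h : overlap γ α = d) : α = γ := by
  have hγα : γ.1 ⊆ α.1 :=
    inter_eq_left.1 (eq_of_subset_of_card_le inter_subset_left (γ.2.trans h.symm).le)
  exact Subtype.ext (eq_of_subset_of_card_le hγα (α.2.trans γ.2.symm).le).symm

lemma card_compl_union_of_adj {α β : OddVertex d} (h : (oddGraph d).Adj α β) :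
    #((α.1 ∪ β.1)ᶜ) = 1 := by
  rw [card_compl, Fintype.card_fin, card_union_of_disjoint h.2, α.2, β.2]; omega

lemma overlap_add_overlap_of_adj (γ : OddVertex d) {α β : OddVertex d}
    (h : (oddGraph d).Adj α β) :
    overlap γ α + overlap γ β ≤ d ∧ d ≤ overlap γ α + overlap γ β + 1 := by
  have hunion : #(γ.1 ∩ (α.1 ∪ β.1)) = overlap γ α + overlap γ β := by
    rw [inter_union_distrib_left, card_union_of_disjoint
      (h.2.mono inter_subset_right inter_subset_right)]; rfl
  have hsplit := card_sdiff_add_card_inter γ.1 (α.1 ∪ β.1)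
  have hout := card_le_card (show γ.1 \ (α.1 ∪ β.1) ⊆ (α.1 ∪ β.1)ᶜ from
    fun x hx => mem_compl.2 (mem_sdiff.1 hx).2)
  rw [card_compl_union_of_adj h] at hout
  have hγ : #γ.1 = d := γ.2
  omega

lemma exists_adj_overlap_eq (hd : 0 < d) (γ α : OddVertex d) {j : ℕ}
    (hlo : d ≤ overlap γ α + j + 1) (hhi : overlap γ α + j ≤ d) :
    ∃ β, (oddGraph d).Adj α β ∧ overlap γ β = j := by
  have hγα : #(γ.1 ∩ α.1ᶜ) = d - overlap γ α := by
    have := card_sdiff_add_card_inter γ.1 α.1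
    rw [sdiff_eq_inter_compl, γ.2] at this
    unfold overlap; omega
  have hαγ : #(α.1ᶜ \ γ.1) = overlap γ α + 1 := by
    have := card_sdiff_add_card_inter α.1ᶜ γ.1
    rw [card_compl_vertex, inter_comm, hγα] at this
    have := overlap_le γ α
    omega
  obtain ⟨t, ht⟩ : ({t ∈ powersetCard d α.1ᶜ | #(γ.1 ∩ t) = j}).Nonempty := by
    rw [← card_pos, card_filter_powersetCard_card_inter_eq _ _ (by omega : j ≤ d), hγα, hαγ]
    exact Nat.mul_pos (Nat.choose_pos (by omega)) (Nat.choose_pos (by omega))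
  simp only [mem_filter, mem_powersetCard, subset_compl_iff_disjoint_right] at ht
  obtain ⟨⟨htα, htd⟩, htj⟩ := ht
  refine ⟨⟨t, htd⟩, ⟨fun hαβ => ?_, htα.symm⟩, htj⟩
  have hαt : α.1 = t := congrArg Subtype.val hαβ
  rw [← hαt, disjoint_self, bot_eq_empty] at htα
  have hα := α.2
  rw [htα, card_empty] at hα
  omega

lemma exists_walk_of_overlap (hd : 0 < d) (γ : OddVertex d) (k : ℕ) :
    (∀ α, overlap γ α + k = d → ∃ w : (oddGraph d).Walk γ α, w.length = 2 * k) ∧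
    (∀ α, overlap γ α = k → ∃ w : (oddGraph d).Walk γ α, w.length = 2 * k + 1) := by
  have odd_of_even (k : ℕ)
      (heven : ∀ α, overlap γ α + k = d → ∃ w : (oddGraph d).Walk γ α, w.length = 2 * k)
      (α : OddVertex d) (hα : overlap γ α = k) :
      ∃ w : (oddGraph d).Walk γ α, w.length = 2 * k + 1 := by
    have := overlap_le γ α
    obtain ⟨β, hαβ, hβ⟩ := exists_adj_overlap_eq hd γ α (j := d - k) (by omega) (by omega)
    obtain ⟨w, hw⟩ := heven β (by omega)
    exact ⟨w.concat hαβ.symm, by rw [Walk.length_concat, hw]⟩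
  induction k with
  | zero =>
    have heven (α : OddVertex d) (hα : overlap γ α + 0 = d) :
        ∃ w : (oddGraph d).Walk γ α, w.length = 2 * 0 :=
      eq_of_overlap_eq hα ▸ ⟨Walk.nil, rfl⟩
    exact ⟨heven, odd_of_even 0 heven⟩
  | succ k ih =>
    have heven (α : OddVertex d) (hα : overlap γ α + (k + 1) = d) :
        ∃ w : (oddGraph d).Walk γ α, w.length = 2 * (k + 1) := by
      obtain ⟨β, hαβ, hβ⟩ := exists_adj_overlap_eq hd γ α (j := k) (by omega) (by omega)
      obtain ⟨w, hw⟩ := ih.2 β hβ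
      exact ⟨w.concat hαβ.symm, by rw [Walk.length_concat, hw]; ring⟩
    exact ⟨heven, odd_of_even (k + 1) heven⟩

lemma min_le_length_walk {α γ : OddVertex d} (w : (oddGraph d).Walk α γ) :
    min (2 * (d - overlap γ α)) (2 * overlap γ α + 1) ≤ w.length := by
  induction w with
  | nil => simp [overlap_self]
  | @cons α β γ hαβ _ ih =>
    have := overlap_add_overlap_of_adj γ hαβ
    have := overlap_le γ α
    have := overlap_le γ β
    rw [Walk.length_cons]
    omega

theorem dist_eq (hd : 0 < d) (γ α : OddVertex d) :
    (oddGraph d).dist γ α = min (2 * (d - overlap γ α)) (2 * overlap γ α + 1) := by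
  obtain ⟨w₁, hw₁⟩ := (exists_walk_of_overlap hd γ (d - overlap γ α)).1 α
    (by have := overlap_le γ α; omega)
  obtain ⟨w₂, hw₂⟩ := (exists_walk_of_overlap hd γ (overlap γ α)).2 α rfl
  obtain ⟨p, hp⟩ := w₁.reachable.exists_walk_length_eq_dist
  refine le_antisymm (le_min ?_ ?_) ?_
  · exact hw₁ ▸ dist_le w₁
  · exact hw₂ ▸ dist_le w₂
  · simpa [hp] using min_le_length_walk p.reverse

theorem dist_eq_iff_overlap_eq_half (hd : 0 < d) (γ α : OddVertex d) :
    (oddGraph d).dist γ α = d ↔ overlap γ α = d / 2 := by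
  rw [dist_eq hd]
  have := overlap_le γ α
  omega

theorem natCard_setOf_dist_eq (hd : 0 < d) (γ : OddVertex d) :
    Nat.card {α : OddVertex d | (oddGraph d).dist γ α = d}
      = d.choose (d / 2) * (d + 1).choose (d - d / 2) := by
  simp_rw [dist_eq_iff_overlap_eq_half hd, overlap]
  rw [natCard_setOf_subtype_card_eq d (fun t => #(γ.1 ∩ t) = d / 2),
    card_filter_powersetCard_card_inter_eq _ _ (Nat.div_le_self d 2), inter_univ, γ.2,
    ← compl_eq_univ_sdiff, card_compl_vertex]

end OddGraph

open OddGraph in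
/-- the `d`-th subconstituent of the Odd graph `O_{d+1}` (`d ≥ 3`) with
respect to any vertex has exactly `C(d, m) * C(d+1, m)` vertices, where `m = d/2` for
even `d` and `m = (d+1)/2` for odd `d`. -/
theorem oddGraph_card_last_subconstituent (d : ℕ) (hd : 3 ≤ d) (m : ℕ)
    (hm : m = if Even d then d / 2 else (d + 1) / 2) (γ : OddVertex d) :
    Nat.card {α : OddVertex d | (oddGraph d).dist γ α = d}
      = d.choose m * (d + 1).choose m := by
  rw [natCard_setOf_dist_eq (by omega), hm]
  obtain ⟨k, rfl | rfl⟩ := Nat.even_or_odd' d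
  · simp [show 2 * k / 2 = k by omega, show 2 * k - k = k by omega]
  · rw [if_neg (Nat.not_even_iff_odd.2 (odd_two_mul_add_one k)),
      show (2 * k + 1) / 2 = k by omega, show 2 * k + 1 - k = k + 1 by omega,
      show (2 * k + 1 + 1) / 2 = k + 1 by omega, Nat.choose_symm_half]
end

section
/- Let d ≥ 3 and let Γ be the Odd graph O_{d+1}. Fix a vertex γ. Then: (1) for every integer h with 1 ≤ h ≤ d−1, no two vertices of Γ_h(γ) are adjacent in Γ (the h-th subconstituent has no edges); and (2) every vertex of Γ_d(γ) has exactly ⌈(d+1)/2⌉ neighbors in Γ_d(γ) (the d-th subconstituent is regular with valency ⌈(d+1)/2⌉). -/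
open Finset

/-!
Everything is governed by the intersection number `t = #(γ ∩ β)`. The neighbours of `β` are the
sets `βᶜ.erase x`, whose intersection number with `γ` is `d - t - 1` or `d - t` according as
`x ∈ γ` or not. Hence `min (2 (d - t)) (2 t + 1)` changes by at most one along an edge and can
always be lowered by one, so it is the distance from `γ`. Along an edge the two intersection
numbers sum to `d - 1` or `d`, which the formula only allows at common distance `d`. A vertex `α`
at distance `d` has `t = ⌊d/2⌋`, and `αᶜ.erase x` stays at distance `d` exactly when `x ∈ γ`
matches the parity of `d`: `⌈(d+1)/2⌉` choices of `x ∉ α`.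
-/

namespace SimpleGraph

variable {V : Type*} {G : SimpleGraph V}

theorem le_add_length_of_adj_le {f : V → ℕ} (hf : ∀ u v, G.Adj u v → f v ≤ f u + 1)
    {u v : V} (p : G.Walk u v) : f v ≤ f u + p.length := by
  induction p with
  | nil => simp
  | cons h _ ih => have := hf _ _ h; rw [Walk.length_cons]; omega

theorem dist_eq_of_adj_le_of_exists_adj {a : V} (f : V → ℕ) (hf_zero : ∀ v, f v = 0 ↔ v = a)
    (hf_adj : ∀ u v, G.Adj u v → f v ≤ f u + 1)
    (hf_desc : ∀ v, f v ≠ 0 → ∃ u, G.Adj u v ∧ f u + 1 = f v) (v : V) :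
    G.dist a v = f v := by
  have walk : ∀ n v, f v = n → ∃ p : G.Walk a v, p.length = n := by
    intro n
    induction n with
    | zero => rintro v hv; obtain rfl := (hf_zero v).1 hv; exact ⟨.nil, rfl⟩
    | succ n ih =>
      intro v hv
      obtain ⟨u, huv, hu⟩ := hf_desc v (by omega)
      obtain ⟨p, hp⟩ := ih u (by omega)
      exact ⟨p.concat huv, by rw [Walk.length_concat, hp]⟩
  obtain ⟨p, hp⟩ := walk (f v) v rfl
  obtain ⟨q, hq⟩ := Reachable.exists_walk_length_eq_dist ⟨p⟩
  have hfa := (hf_zero a).2 rfl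
  have := le_add_length_of_adj_le hf_adj q
  have := dist_le p
  omega

end SimpleGraph

namespace OddGraph

variable {d : ℕ}

def interCard (α β : OddVertex d) : ℕ := #(α.1 ∩ β.1)

theorem interCard_le (α β : OddVertex d) : interCard α β ≤ d :=
  (card_le_card inter_subset_left).trans_eq α.2

theorem interCard_self (α : OddVertex d) : interCard α α = d := by
  simp [interCard, α.2]

theorem eq_of_interCard_eq {α β : OddVertex d} (h : interCard α β = d) : α = β := by
  have hαβ : α.1 ⊆ β.1 := inter_eq_left.1 <|
    eq_of_subset_of_card_le inter_subset_left (by rw [α.2]; exact h.ge)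
  exact Subtype.ext <| eq_of_subset_of_card_le hαβ (by rw [α.2, β.2])

theorem card_compl (α : OddVertex d) : #α.1ᶜ = d + 1 := by
  rw [Finset.card_compl, α.2, Fintype.card_fin]
  omega

theorem card_inter_compl (γ β : OddVertex d) : #(γ.1 ∩ β.1ᶜ) = d - interCard γ β := by
  have := card_sdiff_add_card_inter γ.1 β.1
  rw [γ.2] at this
  rw [← sdiff_eq_inter_compl]
  unfold interCard
  omega

theorem card_compl_filter_mem (γ β : OddVertex d) :
    #(β.1ᶜ.filter (· ∈ γ.1)) = d - interCard γ β := by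
  rw [filter_mem_eq_inter, inter_comm, card_inter_compl]

theorem card_compl_filter_notMem (γ β : OddVertex d) :
    #(β.1ᶜ.filter (· ∉ γ.1)) = interCard γ β + 1 := by
  have := card_filter_add_card_filter_not (s := β.1ᶜ) (· ∈ γ.1)
  rw [card_compl_filter_mem, card_compl] at this
  have := interCard_le γ β
  omega

def complErase (β : OddVertex d) (x : Fin (2 * d + 1)) (hx : x ∈ β.1ᶜ) : OddVertex d :=
  ⟨β.1ᶜ.erase x, by rw [card_erase_of_mem hx, card_compl]; rfl⟩

theorem adj_complErase (hd : 0 < d) (β : OddVertex d) (x : Fin (2 * d + 1)) (hx : x ∈ β.1ᶜ) :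
    (oddGraph d).Adj β (complErase β x hx) := by
  have hdisj : Disjoint β.1 (β.1ᶜ.erase x) :=
    disjoint_compl_right.mono_right (erase_subset x _)
  refine ⟨fun h => ?_, hdisj⟩
  obtain ⟨y, hy⟩ : β.1.Nonempty := card_pos.1 (β.2.symm ▸ hd)
  rw [show β.1ᶜ.erase x = β.1 from congrArg Subtype.val h.symm] at hdisj
  exact disjoint_left.1 hdisj hy hy

theorem exists_eq_complErase_of_adj {β β' : OddVertex d} (h : (oddGraph d).Adj β β') :
    ∃ x hx, β' = complErase β x hx := by
  have hsub : β'.1 ⊆ β.1ᶜ := fun y hy => mem_compl.2 (disjoint_right.1 h.2 hy)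
  obtain ⟨x, hxβ', hins⟩ := exists_eq_insert_iff.2 ⟨hsub, by rw [β'.2, card_compl]⟩
  refine ⟨x, hins ▸ mem_insert_self x _, Subtype.ext ?_⟩
  change β'.1 = β.1ᶜ.erase x
  rw [← hins, erase_insert hxβ']

section complErase

variable {β : OddVertex d} {x : Fin (2 * d + 1)} {hx : x ∈ β.1ᶜ}

theorem interCard_complErase_of_mem (γ : OddVertex d) (hxγ : x ∈ γ.1) :
    interCard γ (complErase β x hx) + 1 = d - interCard γ β := by
  rw [interCard, complErase, inter_erase, card_erase_add_one (mem_inter.2 ⟨hxγ, hx⟩),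
    card_inter_compl]

theorem interCard_complErase_of_notMem (γ : OddVertex d) (hxγ : x ∉ γ.1) :
    interCard γ (complErase β x hx) = d - interCard γ β := by
  rw [interCard, complErase, inter_erase, erase_eq_of_notMem (fun h => hxγ (mem_inter.1 h).1),
    card_inter_compl]

end complErase

theorem interCard_add_interCard_of_adj (γ : OddVertex d) {β β' : OddVertex d}
    (h : (oddGraph d).Adj β β') :
    d ≤ interCard γ β + interCard γ β' + 1 ∧ interCard γ β + interCard γ β' ≤ d := by
  obtain ⟨x, hx, rfl⟩ := exists_eq_complErase_of_adj h
  have := interCard_le γ β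
  by_cases hxγ : x ∈ γ.1
  · have := interCard_complErase_of_mem (hx := hx) γ hxγ
    omega
  · have := interCard_complErase_of_notMem (hx := hx) γ hxγ
    omega

theorem exists_adj_interCard_add_one_eq (γ β : OddVertex d) (h : interCard γ β < d) :
    ∃ β', (oddGraph d).Adj β' β ∧ interCard γ β' + 1 = d - interCard γ β := by
  obtain ⟨x, hx⟩ : (β.1ᶜ.filter (· ∈ γ.1)).Nonempty := by
    rw [← card_pos, card_compl_filter_mem]
    omega
  obtain ⟨hxβ, hxγ⟩ := mem_filter.1 hx
  exact ⟨_, (adj_complErase (by omega) β x hxβ).symm, interCard_complErase_of_mem γ hxγ⟩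

theorem exists_adj_interCard_eq (hd : 0 < d) (γ β : OddVertex d) :
    ∃ β', (oddGraph d).Adj β' β ∧ interCard γ β' = d - interCard γ β := by
  obtain ⟨x, hx⟩ : (β.1ᶜ.filter (· ∉ γ.1)).Nonempty := by
    rw [← card_pos, card_compl_filter_notMem]
    omega
  obtain ⟨hxβ, hxγ⟩ := mem_filter.1 hx
  exact ⟨_, (adj_complErase hd β x hxβ).symm, interCard_complErase_of_notMem γ hxγ⟩

theorem dist_eq_min (γ β : OddVertex d) :
    (oddGraph d).dist γ β = min (2 * (d - interCard γ β)) (2 * interCard γ β + 1) := by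
  refine SimpleGraph.dist_eq_of_adj_le_of_exists_adj
    (fun β => min (2 * (d - interCard γ β)) (2 * interCard γ β + 1)) (fun β => ?_)
    (fun β β' h => ?_) (fun β hβ => ?_) β
  · have := interCard_le γ β
    refine ⟨fun h => (eq_of_interCard_eq (by omega)).symm, ?_⟩
    rintro rfl
    simp [interCard_self]
  · have := interCard_le γ β
    have := interCard_le γ β'
    have := interCard_add_interCard_of_adj γ h
    omega
  · have := interCard_le γ β
    by_cases hsmall : 2 * interCard γ β + 1 ≤ 2 * (d - interCard γ β)
    · obtain ⟨β', hadj, hβ'⟩ := exists_adj_interCard_eq (by omega) γ β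
      exact ⟨β', hadj, by omega⟩
    · obtain ⟨β', hadj, hβ'⟩ := exists_adj_interCard_add_one_eq γ β (by omega)
      exact ⟨β', hadj, by omega⟩

theorem dist_eq_iff_interCard_eq_half (γ β : OddVertex d) :
    (oddGraph d).dist γ β = d ↔ interCard γ β = d / 2 := by
  have := interCard_le γ β
  rw [dist_eq_min]
  omega

theorem dist_eq_of_adj_of_dist_eq {γ α β : OddVertex d} (h : (oddGraph d).Adj α β)
    (hαβ : (oddGraph d).dist γ α = (oddGraph d).dist γ β) : (oddGraph d).dist γ α = d := by
  rw [dist_eq_min, dist_eq_min] at hαβ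
  rw [dist_eq_min]
  have := interCard_le γ α
  have := interCard_le γ β
  have := interCard_add_interCard_of_adj γ h
  omega

theorem dist_complErase_eq_iff {γ α : OddVertex d} (hα : (oddGraph d).dist γ α = d)
    (x : Fin (2 * d + 1)) (hx : x ∈ α.1ᶜ) :
    (oddGraph d).dist γ (complErase α x hx) = d ↔ (x ∈ γ.1 ↔ Odd d) := by
  rw [dist_eq_iff_interCard_eq_half] at hα ⊢
  rw [Nat.odd_iff]
  by_cases hxγ : x ∈ γ.1
  · have := interCard_complErase_of_mem (hx := hx) γ hxγ
    simp only [hxγ, true_iff]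
    omega
  · have := interCard_complErase_of_notMem (hx := hx) γ hxγ
    simp only [hxγ, false_iff]
    omega

theorem card_adj_dist_eq (hd : 0 < d) {γ α : OddVertex d} (hα : (oddGraph d).dist γ α = d) :
    Nat.card {β | (oddGraph d).Adj α β ∧ (oddGraph d).dist γ β = d}
      = #(α.1ᶜ.filter (fun x => x ∈ γ.1 ↔ Odd d)) := by
  rw [Nat.card_coe_set_eq, ← Set.ncard_coe_finset]
  symm
  refine Set.ncard_congr (fun x hx => complErase α x (mem_filter.1 hx).1) ?_ ?_ ?_
  · intro x hx
    obtain ⟨hxα, hxγ⟩ := mem_filter.1 hx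
    exact ⟨adj_complErase hd α x hxα, (dist_complErase_eq_iff hα x hxα).2 hxγ⟩
  · intro x y hx _ hxy
    exact (erase_inj _ (mem_filter.1 hx).1).1 (congrArg Subtype.val hxy)
  · rintro β ⟨hadj, hβ⟩
    obtain ⟨x, hx, rfl⟩ := exists_eq_complErase_of_adj hadj
    exact ⟨x, mem_filter.2 ⟨hx, (dist_complErase_eq_iff hα x hx).1 hβ⟩, rfl⟩

theorem card_compl_filter_mem_iff_odd {γ α : OddVertex d} (hα : interCard γ α = d / 2) :
    #(α.1ᶜ.filter (fun x => x ∈ γ.1 ↔ Odd d)) = (d + 2) / 2 := by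
  rcases Nat.even_or_odd d with hd | hd
  · simp only [Nat.not_odd_iff_even.2 hd, iff_false]
    rw [card_compl_filter_notMem, hα]
    have := Nat.even_iff.1 hd
    omega
  · simp only [hd, iff_true]
    rw [card_compl_filter_mem, hα]
    have := Nat.odd_iff.1 hd
    omega

end OddGraph

/-- in the Odd graph `O_{d+1}` (`d ≥ 3`), with respect to any vertex `γ`:
(1) for `1 ≤ h ≤ d - 1` the `h`-th subconstituent has no edges, and (2) the `d`-th
subconstituent is regular of valency `⌈(d+1)/2⌉` (which equals `(d+2)/2` in natural
number division). -/
theorem oddGraph_subconstituents (d : ℕ) (hd : 3 ≤ d) (γ : OddVertex d) :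
    (∀ h : ℕ, 1 ≤ h → h ≤ d - 1 → ∀ α β : OddVertex d,
      (oddGraph d).dist γ α = h → (oddGraph d).dist γ β = h → ¬ (oddGraph d).Adj α β)
    ∧ (∀ α : OddVertex d, (oddGraph d).dist γ α = d →
        Nat.card {β : OddVertex d | (oddGraph d).Adj α β ∧ (oddGraph d).dist γ β = d}
          = (d + 2) / 2) := by
  refine ⟨fun h h1 h2 α β hα hβ hadj => ?_, fun α hα => ?_⟩
  · have := OddGraph.dist_eq_of_adj_of_dist_eq hadj (hα.trans hβ.symm)
    omega
  · rw [OddGraph.card_adj_dist_eq (by omega) hα]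
    exact OddGraph.card_compl_filter_mem_iff_odd
      ((OddGraph.dist_eq_iff_interCard_eq_half γ α).1 hα)
end

section
/- Let d ≥ 3 and let Γ be the Odd graph O_{d+1}. For any vertex γ of Γ, the subgraph of Γ induced on Γ_1(γ) ∪ Γ_2(γ) is not connected. -/
open Finset

lemma odd_subset_compl {n : ℕ} {s t : Finset (Fin n)} (h : Disjoint s t) : s ⊆ tᶜ :=
  fun x hx => Finset.mem_compl.mpr fun hx' => (Finset.disjoint_left.mp h hx) hx'

lemma odd_card_compl (d : ℕ) (γ : OddVertex d) :
    ((γ : Finset (Fin (2*d+1)))ᶜ).card = d + 1 := by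
  rw [Finset.card_compl, γ.2]
  simp [Fintype.card_fin]
  omega

/-- Classification of vertices at distance 1 or 2 from `γ`. -/
lemma odd_classify (d : ℕ) (hd : 3 ≤ d) (γ α : OddVertex d)
    (h : (oddGraph d).dist γ α = 1 ∨ (oddGraph d).dist γ α = 2) :
    Disjoint (α : Finset (Fin (2*d+1))) (γ : Finset (Fin (2*d+1))) ∨
      ((α : Finset (Fin (2*d+1))) \ (γ : Finset (Fin (2*d+1)))).card = 1 := by
  rcases h with h1 | h2
  · left
    exact ((SimpleGraph.dist_eq_one_iff_adj.mp h1).2).symm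
  · right
    obtain ⟨p, hp⟩ := SimpleGraph.exists_walk_of_dist_ne_zero (by rw [h2]; norm_num)
    rw [h2] at hp
    cases p with
    | nil => simp at hp
    | cons h q =>
      cases q with
      | nil => simp at hp
      | cons h' q' =>
        rename_i b c
        simp [SimpleGraph.Walk.length_cons] at hp
        have hmid := hp.eq
        subst hmid
        -- endpoint is now named `c`; middle vertex is `b`
        have hγb : Disjoint (γ : Finset (Fin (2*d+1))) (b : Finset (Fin (2*d+1))) := h.2
        have hbα : Disjoint (b : Finset (Fin (2*d+1))) (c : Finset (Fin (2*d+1))) := h'.2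
        have hγsub : (γ : Finset (Fin (2*d+1))) ⊆ (b : Finset (Fin (2*d+1)))ᶜ :=
          odd_subset_compl hγb
        have hαsub : (c : Finset (Fin (2*d+1))) ⊆ (b : Finset (Fin (2*d+1)))ᶜ :=
          odd_subset_compl hbα.symm
        have hunion : ((c : Finset (Fin (2*d+1))) ∪ (γ : Finset (Fin (2*d+1)))).card ≤ d + 1 := by
          calc _ ≤ ((b : Finset (Fin (2*d+1)))ᶜ).card :=
                Finset.card_le_card (Finset.union_subset hαsub hγsub)
            _ = d + 1 := odd_card_compl d b
        have hinter : ((c : Finset (Fin (2*d+1))) ∩ (γ : Finset (Fin (2*d+1)))).card ≥ d - 1 := by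
          have := Finset.card_union_add_card_inter (c : Finset (Fin (2*d+1)))
            (γ : Finset (Fin (2*d+1)))
          rw [c.2, γ.2] at this
          omega
        have hsd : ((c : Finset (Fin (2*d+1))) \ (γ : Finset (Fin (2*d+1)))).card ≤ 1 := by
          have := Finset.card_inter_add_card_sdiff (c : Finset (Fin (2*d+1)))
            (γ : Finset (Fin (2*d+1)))
          rw [c.2] at this
          omega
        have hne : (c : Finset (Fin (2*d+1))) ≠ (γ : Finset (Fin (2*d+1))) := by
          intro hEq
          have : γ = c := Subtype.ext hEq.symm
          rw [this] at h2
          rw [SimpleGraph.dist_self] at h2; omega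
        have hnonempty : ((c : Finset (Fin (2*d+1))) \ (γ : Finset (Fin (2*d+1)))).Nonempty := by
          rw [Finset.sdiff_nonempty]
          intro hsub
          exact hne (Finset.eq_of_subset_of_card_le hsub (by rw [c.2, γ.2]))
        have := Finset.card_pos.mpr hnonempty
        omega

/-- in the Odd graph `O_{d+1}` (`d ≥ 3`), for any vertex `γ` the subgraph
induced on `Γ_1(γ) ∪ Γ_2(γ)` is not connected. -/
theorem oddGraph_first_two_subconstituents_not_connected (d : ℕ) (hd : 3 ≤ d)
    (γ : OddVertex d) :
    ¬ ((oddGraph d).induce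
        {α : OddVertex d | (oddGraph d).dist γ α = 1 ∨ (oddGraph d).dist γ α = 2}).Connected := by
  intro hconn
  set S : Set (OddVertex d) :=
    {α : OddVertex d | (oddGraph d).dist γ α = 1 ∨ (oddGraph d).dist γ α = 2} with hS
  -- pick two distinct elements of γᶜ
  have hcompl := odd_card_compl d γ
  obtain ⟨x₀, hx₀, x₁, hx₁, hx01⟩ :=
    Finset.one_lt_card.mp (by omega : 1 < ((γ : Finset (Fin (2*d+1)))ᶜ).card)
  have hx₀γ : x₀ ∉ (γ : Finset (Fin (2*d+1))) := Finset.mem_compl.mp hx₀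
  have hx₁γ : x₁ ∉ (γ : Finset (Fin (2*d+1))) := Finset.mem_compl.mp hx₁
  -- the invariant
  set P : OddVertex d → Prop := fun α =>
    (Disjoint (α : Finset (Fin (2*d+1))) (γ : Finset (Fin (2*d+1))) ∧
      x₀ ∉ (α : Finset (Fin (2*d+1)))) ∨
    (x₀ ∈ (α : Finset (Fin (2*d+1))) ∧
      ¬ Disjoint (α : Finset (Fin (2*d+1))) (γ : Finset (Fin (2*d+1)))) with hP
  -- P is preserved along edges within S
  have key : ∀ α β : OddVertex d, α ∈ S → β ∈ S → (oddGraph d).Adj α β → P α → P β := by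
    intro α β hαS hβS hadj hPα
    have hdisj : Disjoint (α : Finset (Fin (2*d+1))) (β : Finset (Fin (2*d+1))) := hadj.2
    rcases odd_classify d hd γ α hαS with hα1 | hα2 <;>
      rcases odd_classify d hd γ β hβS with hβ1 | hβ2
    · -- both disjoint from γ: impossible
      exfalso
      have hαsub : (α : Finset (Fin (2*d+1))) ⊆ (γ : Finset (Fin (2*d+1)))ᶜ :=
        odd_subset_compl hα1
      have hβsub : (β : Finset (Fin (2*d+1))) ⊆ (γ : Finset (Fin (2*d+1)))ᶜ :=
        odd_subset_compl hβ1
      have := Finset.card_union_of_disjoint hdisj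
      have hle : ((α : Finset (Fin (2*d+1))) ∪ (β : Finset (Fin (2*d+1)))).card ≤ d + 1 := by
        calc _ ≤ ((γ : Finset (Fin (2*d+1)))ᶜ).card :=
              Finset.card_le_card (Finset.union_subset hαsub hβsub)
          _ = d + 1 := hcompl
      rw [this, α.2, β.2] at hle
      omega
    · -- α ∈ Γ₁, β ∈ Γ₂
      -- P α must be the left disjunct
      have hPα' : x₀ ∉ (α : Finset (Fin (2*d+1))) := by
        rcases hPα with ⟨_, h⟩ | ⟨_, h⟩
        · exact h
        · exact absurd hα1 h
      -- β's extra element equals x₀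
      obtain ⟨x', hx'⟩ := Finset.card_eq_one.mp hβ2
      have hx'β : x' ∈ (β : Finset (Fin (2*d+1))) := by
        have : x' ∈ (β : Finset (Fin (2*d+1))) \ (γ : Finset (Fin (2*d+1))) := by
          rw [hx']; exact Finset.mem_singleton_self x'
        exact (Finset.mem_sdiff.mp this).1
      have hx'γ : x' ∉ (γ : Finset (Fin (2*d+1))) := by
        have : x' ∈ (β : Finset (Fin (2*d+1))) \ (γ : Finset (Fin (2*d+1))) := by
          rw [hx']; exact Finset.mem_singleton_self x'
        exact (Finset.mem_sdiff.mp this).2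
      have hx'α : x' ∉ (α : Finset (Fin (2*d+1))) :=
        Finset.disjoint_right.mp hdisj hx'β
      -- γᶜ \ α = {x₀}
      have hαsub : (α : Finset (Fin (2*d+1))) ⊆ (γ : Finset (Fin (2*d+1)))ᶜ :=
        odd_subset_compl hα1
      have hcard1 : ((γ : Finset (Fin (2*d+1)))ᶜ \ (α : Finset (Fin (2*d+1)))).card = 1 := by
        rw [Finset.card_sdiff_of_subset hαsub, hcompl, α.2]
        omega
      have hx₀mem : x₀ ∈ (γ : Finset (Fin (2*d+1)))ᶜ \ (α : Finset (Fin (2*d+1))) :=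
        Finset.mem_sdiff.mpr ⟨hx₀, hPα'⟩
      have hx'mem : x' ∈ (γ : Finset (Fin (2*d+1)))ᶜ \ (α : Finset (Fin (2*d+1))) :=
        Finset.mem_sdiff.mpr ⟨Finset.mem_compl.mpr hx'γ, hx'α⟩
      have hxx : x' = x₀ := by
        obtain ⟨y, hy⟩ := Finset.card_eq_one.mp hcard1
        rw [hy, Finset.mem_singleton] at hx₀mem hx'mem
        rw [hx'mem, hx₀mem]
      right
      constructor
      · rw [← hxx]; exact hx'β
      · -- β ∩ γ has card d - 1 > 0
        intro hd'
        have : ((β : Finset (Fin (2*d+1))) \ (γ : Finset (Fin (2*d+1)))) =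
            (β : Finset (Fin (2*d+1))) := Finset.sdiff_eq_self_of_disjoint hd'
        rw [this, β.2] at hβ2
        omega
    · -- α ∈ Γ₂, β ∈ Γ₁
      have hPα' : x₀ ∈ (α : Finset (Fin (2*d+1))) := by
        rcases hPα with ⟨h, _⟩ | ⟨h, _⟩
        · exfalso
          have : ((α : Finset (Fin (2*d+1))) \ (γ : Finset (Fin (2*d+1)))) =
              (α : Finset (Fin (2*d+1))) := Finset.sdiff_eq_self_of_disjoint h
          rw [this, α.2] at hα2
          omega
        · exact h
      left
      exact ⟨hβ1, Finset.disjoint_left.mp hdisj hPα'⟩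
    · -- both in Γ₂: impossible
      exfalso
      have hαi : ((α : Finset (Fin (2*d+1))) ∩ (γ : Finset (Fin (2*d+1)))).card = d - 1 := by
        have := Finset.card_inter_add_card_sdiff (α : Finset (Fin (2*d+1)))
          (γ : Finset (Fin (2*d+1)))
        rw [α.2, hα2] at this
        omega
      have hβi : ((β : Finset (Fin (2*d+1))) ∩ (γ : Finset (Fin (2*d+1)))).card = d - 1 := by
        have := Finset.card_inter_add_card_sdiff (β : Finset (Fin (2*d+1)))
          (γ : Finset (Fin (2*d+1)))
        rw [β.2, hβ2] at this
        omega
      have hdisj' : Disjoint ((α : Finset (Fin (2*d+1))) ∩ (γ : Finset (Fin (2*d+1))))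
          ((β : Finset (Fin (2*d+1))) ∩ (γ : Finset (Fin (2*d+1)))) :=
        (hdisj.mono Finset.inter_subset_left Finset.inter_subset_left)
      have hsub : ((α : Finset (Fin (2*d+1))) ∩ (γ : Finset (Fin (2*d+1)))) ∪
          ((β : Finset (Fin (2*d+1))) ∩ (γ : Finset (Fin (2*d+1)))) ⊆
          (γ : Finset (Fin (2*d+1))) :=
        Finset.union_subset Finset.inter_subset_right Finset.inter_subset_right
      have := Finset.card_le_card hsub
      rw [Finset.card_union_of_disjoint hdisj', hαi, hβi, γ.2] at this
      omega
  -- the invariant is preserved along walks in the induced graph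
  have walk_inv : ∀ (a b : ↥S) (w : ((oddGraph d).induce S).Walk a b),
      P ↑a → P ↑b := by
    intro a b w
    induction w with
    | nil => exact id
    | cons h q ih =>
      intro hPa
      rename_i u v _
      exact ih (key ↑u ↑v u.2 v.2 h hPa)
  -- construct the two vertices
  have hu_card : ((γ : Finset (Fin (2*d+1)))ᶜ \ {x₀}).card = d := by
    rw [Finset.card_sdiff_of_subset (Finset.singleton_subset_iff.mpr hx₀), hcompl,
      Finset.card_singleton]
    omega
  have hv_card : ((γ : Finset (Fin (2*d+1)))ᶜ \ {x₁}).card = d := by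
    rw [Finset.card_sdiff_of_subset (Finset.singleton_subset_iff.mpr hx₁), hcompl,
      Finset.card_singleton]
    omega
  set u : OddVertex d := ⟨(γ : Finset (Fin (2*d+1)))ᶜ \ {x₀}, hu_card⟩ with hu
  set v : OddVertex d := ⟨(γ : Finset (Fin (2*d+1)))ᶜ \ {x₁}, hv_card⟩ with hv
  have hdisj_u : Disjoint (γ : Finset (Fin (2*d+1))) ((u : Finset (Fin (2*d+1)))) := by
    refine Finset.disjoint_left.mpr fun x hx hx' => ?_
    have := (Finset.mem_sdiff.mp hx').1
    exact (Finset.mem_compl.mp this) hx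
  have hdisj_v : Disjoint (γ : Finset (Fin (2*d+1))) ((v : Finset (Fin (2*d+1)))) := by
    refine Finset.disjoint_left.mpr fun x hx hx' => ?_
    have := (Finset.mem_sdiff.mp hx').1
    exact (Finset.mem_compl.mp this) hx
  have hx₁u : x₁ ∈ (u : Finset (Fin (2*d+1))) :=
    Finset.mem_sdiff.mpr ⟨hx₁, by simp [Ne.symm hx01]⟩
  have hx₀v : x₀ ∈ (v : Finset (Fin (2*d+1))) :=
    Finset.mem_sdiff.mpr ⟨hx₀, by simp [hx01]⟩
  have hadj_u : (oddGraph d).Adj γ u := by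
    refine ⟨fun hEq => ?_, hdisj_u⟩
    have : x₁ ∈ (γ : Finset (Fin (2*d+1))) := by rw [hEq]; exact hx₁u
    exact hx₁γ this
  have hadj_v : (oddGraph d).Adj γ v := by
    refine ⟨fun hEq => ?_, hdisj_v⟩
    have : x₀ ∈ (γ : Finset (Fin (2*d+1))) := by rw [hEq]; exact hx₀v
    exact hx₀γ this
  have huS : u ∈ S := Or.inl (SimpleGraph.dist_eq_one_iff_adj.mpr hadj_u)
  have hvS : v ∈ S := Or.inl (SimpleGraph.dist_eq_one_iff_adj.mpr hadj_v)
  -- P u holds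
  have hPu : P u := Or.inl ⟨hdisj_u.symm, fun hx => (Finset.mem_sdiff.mp hx).2 (Finset.mem_singleton_self x₀)⟩
  -- P v fails
  have hPv : ¬ P v := by
    rintro (⟨_, h⟩ | ⟨_, h⟩)
    · exact h hx₀v
    · exact h hdisj_v.symm
  -- contradiction via connectivity
  obtain ⟨w⟩ := hconn.preconnected ⟨u, huS⟩ ⟨v, hvS⟩
  exact hPv (walk_inv ⟨u, huS⟩ ⟨v, hvS⟩ w hPu)
end
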